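/- arXiv:2210.03803 — 6 statements merged into one kernel-verified Lean document; each statement's English description precedes it below -/
import Mathlib

section
/- Let G be a claw-free graph (no induced subgraph isomorphic to K_{1,3}), and let S, T be disjoint stable (independent) sets of vertices of G such that the subgraph induced by S ∪ T is connected. Then ||S| - |T|| ≤ 1. -/
open SimpleGraph

/-- A graph is claw-free if it has no induced subgraph isomorphic to the claw `K_{1,3}`:
there is no injective map `f : Fin 4 → V` such that `f 0` is adjacent to `f 1, f 2, f 3`
and these are the only adjacencies among the four vertices. -/
def ClawFree {V : Type*} (G : SimpleGraph V) : Prop :=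
  ¬ ∃ f : Fin 4 → V, Function.Injective f ∧
      ∀ i j : Fin 4, G.Adj (f i) (f j) ↔ ((i = 0 ∧ j ≠ 0) ∨ (j = 0 ∧ i ≠ 0))

/-
Count the edges between `S` and `T`. In the bipartite graph induced on `S ∪ T` every
neighbourhood is stable, so claw-freeness bounds every degree by 2; summing degrees over one
side gives at most `2|S|` and at most `2|T|` edges. Connectivity gives at least
`|S| + |T| - 1` edges, hence `|S| + |T| ≤ 2 min(|S|, |T|) + 1`.
-/

open Finset

namespace ClawFree

variable {V : Type*} {G : SimpleGraph V}

theorem adj_or_adj_or_adj (hG : ClawFree G) {v a b c : V} (ha : G.Adj v a) (hb : G.Adj v b)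
    (hc : G.Adj v c) (hab : a ≠ b) (hac : a ≠ c) (hbc : b ≠ c) :
    G.Adj a b ∨ G.Adj a c ∨ G.Adj b c := by
  by_contra! ⟨nab, nac, nbc⟩
  refine hG ⟨![v, a, b, c], ?_, ?_⟩
  · have := ha.ne; have := hb.ne; have := hc.ne
    intro i j hij
    fin_cases i <;> fin_cases j <;> simp_all [eq_comm]
  · intro i j
    fin_cases i <;> fin_cases j <;> simp_all [G.adj_comm]

theorem induce (hG : ClawFree G) (s : Set V) : ClawFree (G.induce s) :=
  fun ⟨f, hf, hadj⟩ => hG ⟨Subtype.val ∘ f, Subtype.val_injective.comp hf, hadj⟩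

theorem degree_le_two (hG : ClawFree G) {v : V} [Fintype (G.neighborSet v)]
    (hv : G.IsIndepSet (G.neighborSet v)) : G.degree v ≤ 2 := by
  by_contra! h
  rw [← card_neighborFinset_eq_degree] at h
  obtain ⟨a, ha, b, hb, c, hc, hab, hac, hbc⟩ := two_lt_card.1 h
  rw [mem_neighborFinset] at ha hb hc
  rcases hG.adj_or_adj_or_adj ha hb hc hab hac hbc with h | h | h
  · exact hv ha hb hab h
  · exact hv ha hc hac h
  · exact hv hb hc hbc h

end ClawFree

namespace SimpleGraph

variable {V : Type*} {G : SimpleGraph V} {s t : Set V}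

theorem IsBipartiteWith.isIndepSet_neighborSet (h : G.IsBipartiteWith s t) (v : V) :
    G.IsIndepSet (G.neighborSet v) := by
  intro a ha b hb _ hab
  have hst := Set.disjoint_left.1 h.disjoint
  have hva := h.mem_of_adj ha
  have hvb := h.mem_of_adj hb
  have hab' := h.mem_of_adj hab
  tauto

theorem isBipartiteWith_induce_union (hst : Disjoint s t) (hs : G.IsIndepSet s)
    (ht : G.IsIndepSet t) :
    (G.induce (s ∪ t)).IsBipartiteWith (Subtype.val ⁻¹' s) (Subtype.val ⁻¹' t) where
  disjoint := hst.preimage _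
  mem_of_adj := by
    rintro ⟨a, ha | ha⟩ ⟨b, hb | hb⟩ hab
    · exact absurd hab (hs ha hb (G.ne_of_adj hab))
    · exact .inl ⟨ha, hb⟩
    · exact .inr ⟨ha, hb⟩
    · exact absurd hab (ht ha hb (G.ne_of_adj hab))

theorem Connected.card_le_two_mul_ncard_add_one [Fintype V] [DecidableRel G.Adj]
    (hG : G.Connected) (h : G.IsBipartiteWith s t) (hdeg : ∀ v ∈ s, G.degree v ≤ 2) :
    Nat.card V ≤ 2 * s.ncard + 1 := by
  lift s to Finset V using s.toFinite
  lift t to Finset V using t.toFinite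
  calc Nat.card V ≤ Nat.card G.edgeSet + 1 := hG.card_vert_le_card_edgeSet_add_one
    _ = ∑ v ∈ s, G.degree v + 1 := by
      rw [isBipartiteWith_sum_degrees_eq_card_edges h, edgeFinset_card, Nat.card_eq_fintype_card]
    _ ≤ 2 * (s : Set V).ncard + 1 := by
      rw [Set.ncard_coe_finset, mul_comm, ← smul_eq_mul]
      gcongr
      exact sum_le_card_nsmul _ _ _ hdeg

end SimpleGraph

theorem clawfree_bipartite_balanced_general {V : Type*}
    (G : SimpleGraph V) (hG : ClawFree G)
    (S T : Finset V) (hdisj : Disjoint S T)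
    (hS : ∀ u ∈ S, ∀ v ∈ S, ¬ G.Adj u v)
    (hT : ∀ u ∈ T, ∀ v ∈ T, ¬ G.Adj u v)
    (hconn : (G.induce ((S : Set V) ∪ (T : Set V))).Connected) :
    |(S.card : ℤ) - (T.card : ℤ)| ≤ 1 := by
  classical
  set U : Set V := (S : Set V) ∪ T
  have hb : (G.induce U).IsBipartiteWith (Subtype.val ⁻¹' S) (Subtype.val ⁻¹' T) :=
    isBipartiteWith_induce_union (disjoint_coe.2 hdisj)
      (fun u hu v hv _ => hS u hu v hv) (fun u hu v hv _ => hT u hu v hv)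
  have hdeg (v : U) : (G.induce U).degree v ≤ 2 :=
    (hG.induce U).degree_le_two (hb.isIndepSet_neighborSet v)
  have hcard {A : Finset V} (hA : (A : Set V) ⊆ U) : (Subtype.val ⁻¹' A : Set U).ncard = #A := by
    rw [Set.ncard_preimage_of_injective_subset_range Subtype.val_injective (by simpa),
      Set.ncard_coe_finset]
  have hU : Nat.card U = #S + #T := by
    rw [Nat.card_coe_set_eq, Set.ncard_union_eq (disjoint_coe.2 hdisj), Set.ncard_coe_finset,
      Set.ncard_coe_finset]
  have hS' := hconn.card_le_two_mul_ncard_add_one hb fun v _ => hdeg v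
  have hT' := hconn.card_le_two_mul_ncard_add_one hb.symm fun v _ => hdeg v
  rw [hU, hcard Set.subset_union_left] at hS'
  rw [hU, hcard Set.subset_union_right] at hT'
  rw [abs_le]
  omega

theorem clawfree_bipartite_balanced {V : Type*} [Fintype V] [DecidableEq V]
    (G : SimpleGraph V) (hG : ClawFree G)
    (S T : Finset V) (hdisj : Disjoint S T)
    (hS : ∀ u ∈ S, ∀ v ∈ S, ¬ G.Adj u v)
    (hT : ∀ u ∈ T, ∀ v ∈ T, ¬ G.Adj u v)
    (hconn : (G.induce ((S : Set V) ∪ (T : Set V))).Connected) :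
    |(S.card : ℤ) - (T.card : ℤ)| ≤ 1 :=
  clawfree_bipartite_balanced_general G hG S T hdisj hS hT hconn
end

section
/- Let γ be an acyclic orientation of a finite graph G, let v_1, v_2 be distinct vertices with v_1 ∈ Sink_i(γ), v_2 ∈ Sink_j(γ), and suppose there is no directed path in γ between v_1 and v_2 in either direction, and v_1v_2 ∉ E(G). Let γ' be the orientation of G + v_1v_2 extending γ with edge directed v_1 → v_2. Then γ' is acyclic and v_1 ∈ Sink_{max(i, j+1)}(γ') and v_2 ∈ Sink_j(γ'). -/
open SimpleGraph

/-- The set of sinks of the restriction of the orientation `r` to the vertex set `A`. -/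
def sinkSet {V : Type*} (r : V → V → Prop) (A : Set V) : Set V :=
  {v ∈ A | ∀ w ∈ A, ¬ r v w}

/-- `remaining r i` is the vertex set of the graph `G^i` obtained from `G^0 = G` by
repeatedly deleting all sinks of the restriction of the orientation. -/
def remaining {V : Type*} (r : V → V → Prop) : ℕ → Set V
  | 0 => Set.univ
  | i + 1 => remaining r i \ sinkSet r (remaining r i)

/-- `SinkLevel r i` (for `i ≥ 1`) is `Sink_i(γ)`. -/
def SinkLevel {V : Type*} (r : V → V → Prop) (i : ℕ) : Set V :=
  sinkSet r (remaining r (i - 1))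

/-- There is a directed path with `k` edges from `a` to `b`. -/
def chainTo {V : Type*} (r : V → V → Prop) : ℕ → V → V → Prop
  | 0, a, b => a = b
  | k + 1, a, b => ∃ u, r a u ∧ chainTo r k u b

/-- There is a directed path with `k` edges starting at `v`. -/
def hasChain {V : Type*} (r : V → V → Prop) (k : ℕ) (v : V) : Prop :=
  ∃ w, chainTo r k v w

lemma chainTo_transGen {V : Type*} {r : V → V → Prop} :
    ∀ {k : ℕ} {a b : V}, chainTo r k a b → k ≠ 0 → Relation.TransGen r a b := by
  intro k
  induction k with
  | zero => intro a b h hk; exact absurd rfl hk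
  | succ n ih =>
    intro a b h _
    obtain ⟨u, hau, hub⟩ := h
    rcases Nat.eq_zero_or_pos n with hn | hn
    · subst hn; cases hub; exact Relation.TransGen.single hau
    · exact Relation.TransGen.head hau (ih hub (by omega))

lemma chainTo_snoc {V : Type*} {r : V → V → Prop} :
    ∀ {k : ℕ} {a b c : V}, chainTo r k a b → r b c → chainTo r (k + 1) a c := by
  intro k
  induction k with
  | zero => intro a b c h hbc; cases h; exact ⟨c, hbc, rfl⟩
  | succ n ih =>
    rintro a b c ⟨u, hau, hub⟩ hbc
    exact ⟨u, hau, ih hub hbc⟩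

lemma transGen_chainTo {V : Type*} {r : V → V → Prop} {a b : V}
    (h : Relation.TransGen r a b) : ∃ k, k ≠ 0 ∧ chainTo r k a b := by
  induction h with
  | single h => exact ⟨1, one_ne_zero, _, h, rfl⟩
  | tail _ h ih =>
    obtain ⟨k, hk, hc⟩ := ih
    exact ⟨k + 1, by omega, chainTo_snoc hc h⟩

lemma hasChain_succ_iff {V : Type*} {r : V → V → Prop} {k : ℕ} {v : V} :
    hasChain r (k + 1) v ↔ ∃ w, r v w ∧ hasChain r k w := by
  constructor
  · rintro ⟨w, u, hvu, huw⟩; exact ⟨u, hvu, w, huw⟩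
  · rintro ⟨u, hvu, w, huw⟩; exact ⟨w, u, hvu, huw⟩

lemma hasChain_mono {V : Type*} {r : V → V → Prop} :
    ∀ {k : ℕ} {v : V}, hasChain r (k + 1) v → hasChain r k v := by
  intro k
  induction k with
  | zero => intro v _; exact ⟨v, rfl⟩
  | succ n ih =>
    intro v h
    obtain ⟨u, hvu, hu⟩ := hasChain_succ_iff.mp h
    exact hasChain_succ_iff.mpr ⟨u, hvu, ih hu⟩

lemma hasChain_of_le {V : Type*} {r : V → V → Prop} {k m : ℕ} {v : V}
    (hkm : k ≤ m) (h : hasChain r m v) : hasChain r k v := by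
  induction m with
  | zero => simpa [Nat.le_zero.mp hkm] using h
  | succ n ih =>
    rcases Nat.eq_or_lt_of_le hkm with h' | h'
    · subst h'; exact h
    · exact ih (by omega) (hasChain_mono h)

lemma mem_remaining_iff {V : Type*} {r : V → V → Prop} :
    ∀ {k : ℕ} {v : V}, v ∈ remaining r k ↔ hasChain r k v := by
  intro k
  induction k with
  | zero => intro v; simp [remaining, hasChain, chainTo]
  | succ n ih =>
    intro v
    constructor
    · rintro ⟨hvr, hvs⟩
      simp only [sinkSet, Set.mem_setOf_eq, not_and, not_forall] at hvs
      obtain ⟨w, hw, hrvw⟩ := hvs hvr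
      simp only [not_not] at hrvw
      exact hasChain_succ_iff.mpr ⟨w, hrvw, ih.mp hw⟩
    · intro h
      obtain ⟨u, hvu, hu⟩ := hasChain_succ_iff.mp h
      refine ⟨ih.mpr (hasChain_mono h), ?_⟩
      simp only [sinkSet, Set.mem_setOf_eq, not_and, not_forall]
      intro _
      exact ⟨u, ih.mpr hu, by simp [hvu]⟩

lemma mem_sinkLevel_iff {V : Type*} {r : V → V → Prop} {i : ℕ} {v : V} :
    v ∈ SinkLevel r i ↔ hasChain r (i - 1) v ∧ ¬ hasChain r (i - 1 + 1) v := by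
  simp only [SinkLevel, sinkSet, Set.mem_setOf_eq, mem_remaining_iff]
  constructor
  · rintro ⟨h1, h2⟩
    refine ⟨h1, fun hc => ?_⟩
    obtain ⟨u, hvu, hu⟩ := hasChain_succ_iff.mp hc
    exact h2 u hu hvu
  · rintro ⟨h1, h2⟩
    exact ⟨h1, fun w hw hvw => h2 (hasChain_succ_iff.mpr ⟨w, hvw, hw⟩)⟩

section AddEdge

variable {V : Type*} {r : V → V → Prop} {v₁ v₂ : V}

lemma chainTo_mono_add {k : ℕ} {a b : V} (h : chainTo r k a b) :
    chainTo (fun a b => r a b ∨ (a = v₁ ∧ b = v₂)) k a b := by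
  induction k generalizing a with
  | zero => exact h
  | succ n ih => obtain ⟨u, hau, hub⟩ := h; exact ⟨u, Or.inl hau, ih hub⟩

lemma chainTo_add_split (hne : v₁ ≠ v₂) (hpath₂₁ : ¬ Relation.TransGen r v₂ v₁) :
    ∀ {k : ℕ} {a b : V}, chainTo (fun a b => r a b ∨ (a = v₁ ∧ b = v₂)) k a b →
      chainTo r k a b ∨
        ∃ p q, p + 1 + q = k ∧ chainTo r p a v₁ ∧ chainTo r q v₂ b := by
  intro k
  induction k with
  | zero => intro a b h; exact Or.inl h
  | succ n ih =>
    rintro a b ⟨u, hau, hub⟩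
    rcases hau with hau | ⟨rfl, rfl⟩
    · rcases ih hub with h | ⟨p, q, hpq, hp, hq⟩
      · exact Or.inl ⟨u, hau, h⟩
      · exact Or.inr ⟨p + 1, q, by omega, ⟨u, hau, hp⟩, hq⟩
    · rcases ih hub with h | ⟨p, q, _, hp, hq⟩
      · exact Or.inr ⟨0, n, by omega, rfl, h⟩
      · -- chainTo r p v₂ v₁ : impossible
        rcases Nat.eq_zero_or_pos p with hp0 | hp0
        · subst hp0; exact absurd hp.symm hne
        · exact absurd (chainTo_transGen hp (by omega)) hpath₂₁

end AddEdge

/-- Let `γ` (modelled by `r`) be an acyclic orientation of a finite graph `G`, with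
distinct vertices `v₁ ∈ Sink_i(γ)`, `v₂ ∈ Sink_j(γ)`, no directed path between `v₁` and
`v₂` in either direction, and `v₁v₂ ∉ E(G)`. Let `γ'` be the orientation of `G + v₁v₂`
extending `γ` with the new edge directed `v₁ → v₂`. Then `γ'` is acyclic,
`v₁ ∈ Sink_{max(i, j+1)}(γ')` and `v₂ ∈ Sink_j(γ')`. -/
theorem sinkLevel_add_edge {V : Type*} [Fintype V]
    (G : SimpleGraph V) (r : V → V → Prop)
    (horient : ∀ a b : V, (r a b ∨ r b a) ↔ G.Adj a b)
    (hone : ∀ a b : V, ¬ (r a b ∧ r b a))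
    (hacyc : ∀ v : V, ¬ Relation.TransGen r v v)
    (v₁ v₂ : V) (hne : v₁ ≠ v₂) (hnadj : ¬ G.Adj v₁ v₂)
    (i j : ℕ) (hi : 1 ≤ i) (hj : 1 ≤ j)
    (hv₁ : v₁ ∈ SinkLevel r i) (hv₂ : v₂ ∈ SinkLevel r j)
    (hpath₁₂ : ¬ Relation.TransGen r v₁ v₂)
    (hpath₂₁ : ¬ Relation.TransGen r v₂ v₁) :
    (∀ v : V, ¬ Relation.TransGen (fun a b => r a b ∨ (a = v₁ ∧ b = v₂)) v v) ∧
      v₁ ∈ SinkLevel (fun a b => r a b ∨ (a = v₁ ∧ b = v₂)) (max i (j + 1)) ∧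
      v₂ ∈ SinkLevel (fun a b => r a b ∨ (a = v₁ ∧ b = v₂)) j := by
  set r' := fun a b => r a b ∨ (a = v₁ ∧ b = v₂) with hr'
  rw [mem_sinkLevel_iff] at hv₁ hv₂
  obtain ⟨h₁c, h₁n⟩ := hv₁
  obtain ⟨h₂c, h₂n⟩ := hv₂
  -- acyclicity of r'
  have hacyc' : ∀ v : V, ¬ Relation.TransGen r' v v := by
    intro v hv
    -- turn TransGen into a chain
    obtain ⟨k, hk, hc⟩ := transGen_chainTo hv
    rcases chainTo_add_split hne hpath₂₁ hc with h | ⟨p, q, hpq, hp, hq⟩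
    · exact hacyc v (chainTo_transGen h hk)
    · -- chainTo r p v v₁, chainTo r q v₂ v → path v₂ → v₁
      have h1 : Relation.ReflTransGen r v v₁ := by
        rcases Nat.eq_zero_or_pos p with h0 | h0
        · subst h0; cases hp; exact Relation.ReflTransGen.refl
        · exact (chainTo_transGen hp (by omega)).to_reflTransGen
      have h2 : Relation.ReflTransGen r v₂ v := by
        rcases Nat.eq_zero_or_pos q with h0 | h0
        · subst h0; cases hq; exact Relation.ReflTransGen.refl
        · exact (chainTo_transGen hq (by omega)).to_reflTransGen
      have h3 : Relation.ReflTransGen r v₂ v₁ := h2.trans h1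
      rcases (Relation.reflTransGen_iff_eq_or_transGen.mp h3) with h | h
      · exact hne h
      · exact hpath₂₁ h
  refine ⟨hacyc', ?_, ?_⟩
  · -- v₁ ∈ SinkLevel r' (max i (j+1))
    rw [mem_sinkLevel_iff]
    have hmax : max i (j + 1) - 1 = max (i - 1) j := by omega
    rw [hmax]
    constructor
    · -- hasChain r' (max (i-1) j) v₁
      rcases Nat.le_total j (i - 1) with hle | hle
      · rw [max_eq_left hle]
        obtain ⟨w, hw⟩ := h₁c
        exact ⟨w, chainTo_mono_add hw⟩
      · rw [max_eq_right hle]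
        obtain ⟨j', rfl⟩ : ∃ j', j = j' + 1 := ⟨j - 1, by omega⟩
        obtain ⟨w, hw⟩ := h₂c
        exact ⟨w, v₂, Or.inr ⟨rfl, rfl⟩, chainTo_mono_add (by simpa using hw)⟩
    · -- no chain of length max (i-1) j + 1 from v₁
      rintro ⟨w, hw⟩
      rcases chainTo_add_split hne hpath₂₁ hw with h | ⟨p, q, hpq, hp, hq⟩
      · -- r-chain of length max(i-1,j)+1 ≥ i - 1 + 1 from v₁
        exact h₁n (hasChain_of_le (by omega) ⟨w, h⟩)
      · -- p must be 0 (else cycle at v₁)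
        rcases Nat.eq_zero_or_pos p with h0 | h0
        · subst h0; cases hp
          -- q = max(i-1,j) ≥ j, chain r q v₂ contradicts h₂n
          have : hasChain r (j - 1 + 1) v₂ :=
            hasChain_of_le (by omega) ⟨w, hq⟩
          exact h₂n this
        · exact hacyc v₁ (chainTo_transGen hp (by omega))
  · -- v₂ ∈ SinkLevel r' j
    rw [mem_sinkLevel_iff]
    constructor
    · obtain ⟨w, hw⟩ := h₂c; exact ⟨w, chainTo_mono_add hw⟩
    · rintro ⟨w, hw⟩
      rcases chainTo_add_split hne hpath₂₁ hw with h | ⟨p, q, hpq, hp, hq⟩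
      · exact h₂n ⟨w, h⟩
      · rcases Nat.eq_zero_or_pos p with h0 | h0
        · subst h0; exact hne hp.symm
        · exact hpath₂₁ (chainTo_transGen hp (by omega))
end

section
/- For positive integers a, μ and nonnegative integer j, let S_{a,μ,j} denote the set of subsets W of the vertex set of the directed cycle C_a on vertices v_1,...,v_a (edges v_1v_2, ..., v_{a-1}v_a, v_av_1) such that |W| = μ and the graph C_a − W (delete W and incident edges) has exactly j connected components. Then for all integers a ≥ 3, μ ≥ 2, j ≥ 1: |S_{a,μ,j}| = |S_{a-1,μ-1,j}| + Σ_{i=μ+j-2}^{a-2} |S_{i,μ-1,j-1}|. -/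
open SimpleGraph

/-- The number of connected components of the graph obtained from the cycle `C_n`
(on labelled vertices `v_1, …, v_n`) by deleting the vertex subset `W` together with
all incident edges. -/
noncomputable def cycNumComponents (n : ℕ) (W : Finset (Fin n)) : ℕ :=
  Nat.card ((cycleGraph n).induce ((↑W : Set (Fin n))ᶜ)).ConnectedComponent

/-- `cycSet n k ℓ` is the set `S_{n,k,ℓ}` of `k`-element subsets `W` of the vertices of
the cycle `C_n` such that `C_n − W` has exactly `ℓ` connected components. -/
noncomputable def cycSet (n k ℓ : ℕ) : Finset (Finset (Fin n)) :=
  Finset.univ.filter (fun W => W.card = k ∧ cycNumComponents n W = ℓ)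

/-!
For nonempty `W`, the components of `C_n − W` are the arcs between consecutive elements of `W`,
and each arc is determined by its last vertex `i ∉ W` with `i + 1 ∈ W`. Cutting the cycle between
`v_n` and `v_1` turns `W` into a binary word; the arcs are the runs of zeros of the word, except
that a run at the end and one at the start merge when both letters at the cut are zero. Counting
words by their numbers of ones and of runs of zeros and by their first and last letters (peel off
the last letter) gives, for `0 < k < n` and `ℓ > 0`,
`|S_{n,k,ℓ}| = C(k-1,ℓ) C(n-k-1,ℓ-1) + 2 C(k-1,ℓ-1) C(n-k-1,ℓ-1) + C(k-1,ℓ-1) C(n-k-1,ℓ)`.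
The recurrence then follows from Pascal's rule and the hockey-stick identity.
-/

open Finset

theorem SimpleGraph.card_connectedComponent_eq_of_section {V α : Type*} {G : SimpleGraph V}
    (f : V → α) (g : α → V) (hadj : ∀ u v, G.Adj u v → f u = f v) (hfg : ∀ a, f (g a) = a)
    (hreach : ∀ v, G.Reachable v (g (f v))) :
    Nat.card G.ConnectedComponent = Nat.card α := by
  have hwalk : ∀ u v, G.Walk u v → f u = f v := by
    intro u v p
    induction p with
    | nil => rfl
    | cons h _ ih => exact (hadj _ _ h).trans ih
  exact Nat.card_congr
    { toFun := ConnectedComponent.lift f fun u v p _ => hwalk u v p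
      invFun := fun a => G.connectedComponentMk (g a)
      left_inv := fun c => c.ind fun v => ConnectedComponent.sound (hreach v).symm
      right_inv := hfg }

theorem SimpleGraph.cycleGraph_adj_iff_add_one {n : ℕ} {x y : Fin (n + 1)} :
    (cycleGraph (n + 1)).Adj x y ↔ x ≠ y ∧ (y = x + 1 ∨ x = y + 1) := by
  rcases n with _ | n
  · simp [Fin.fin_one_eq_zero x, Fin.fin_one_eq_zero y]
  · rw [cycleGraph_adj, sub_eq_iff_eq_add, sub_eq_iff_eq_add, add_comm 1 y, add_comm 1 x]
    constructor
    · rintro (h | h) <;> refine ⟨fun hxy => ?_, by tauto⟩ <;> simp_all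
    · tauto

theorem cycNumComponents_eq_zero_iff {n : ℕ} {W : Finset (Fin n)} :
    cycNumComponents n W = 0 ↔ W = univ := by
  rw [cycNumComponents, Finite.card_eq_zero_iff, eq_univ_iff_forall]
  constructor
  · intro h x
    by_contra hx
    exact h.false (connectedComponentMk _ ⟨x, hx⟩)
  · intro h
    exact ⟨fun c => c.ind fun v => v.2 (h v)⟩

section Arcs

open Fin.CommRing

variable {n : ℕ} {W : Finset (Fin (n + 1))} {x : Fin (n + 1)}

variable (W) in
/-- The last vertices of the arcs of `C_{n+1} − W`. -/
def arcEnds : Finset (Fin (n + 1)) := {i | i ∉ W ∧ i + 1 ∈ W}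

lemma exists_add_natCast_add_one_mem (hW : W.Nonempty) (x : Fin (n + 1)) :
    ∃ t : ℕ, x + (t : Fin (n + 1)) + 1 ∈ W := by
  obtain ⟨w, hw⟩ := hW
  refine ⟨(w - x - 1 : Fin (n + 1)).val, ?_⟩
  rw [Fin.cast_val_eq_self]
  convert hw using 1
  ring

def arcLength (hW : W.Nonempty) (x : Fin (n + 1)) : ℕ :=
  Nat.find (exists_add_natCast_add_one_mem hW x)

def arcEnd (hW : W.Nonempty) (x : Fin (n + 1)) : Fin (n + 1) := x + (arcLength hW x : Fin (n + 1))

lemma arcEnd_add_one_mem (hW : W.Nonempty) : arcEnd hW x + 1 ∈ W :=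
  Nat.find_spec (exists_add_natCast_add_one_mem hW x)

lemma add_notMem_of_le_arcLength (hW : W.Nonempty) (hx : x ∉ W) {t : ℕ}
    (ht : t ≤ arcLength hW x) : x + (t : Fin (n + 1)) ∉ W := by
  rcases t with _ | t
  · simpa using hx
  · simpa [add_assoc] using Nat.find_min (exists_add_natCast_add_one_mem hW x) ht

lemma arcEnd_notMem (hW : W.Nonempty) (hx : x ∉ W) : arcEnd hW x ∉ W :=
  add_notMem_of_le_arcLength hW hx le_rfl

lemma arcEnd_mem_arcEnds (hW : W.Nonempty) (hx : x ∉ W) : arcEnd hW x ∈ arcEnds W := by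
  simp [arcEnds, arcEnd_notMem hW hx, arcEnd_add_one_mem hW]

lemma arcEnd_eq_self (hW : W.Nonempty) (h : x + 1 ∈ W) : arcEnd hW x = x := by
  have : arcLength hW x = 0 := Nat.find_eq_zero _ |>.2 (by simpa using h)
  simp [arcEnd, this]

lemma arcLength_eq_arcLength_add_one (hW : W.Nonempty) (h : x + 1 ∉ W) :
    arcLength hW x = arcLength hW (x + 1) + 1 := by
  have hshift : ∀ {t : ℕ}, x + ((t + 1 : ℕ) : Fin (n + 1)) + 1 ∈ W ↔
      x + 1 + (t : Fin (n + 1)) + 1 ∈ W := by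
    intro t
    rw [show x + ((t + 1 : ℕ) : Fin (n + 1)) + 1 = x + 1 + t + 1 by push_cast; ring]
  rw [arcLength, arcLength, Nat.find_comp_succ _
    ((exists_add_natCast_add_one_mem hW (x + 1)).imp fun _ => hshift.2) (by simpa using h),
    Nat.find_congr' hshift]

lemma arcEnd_add_one (hW : W.Nonempty) (h : x + 1 ∉ W) : arcEnd hW (x + 1) = arcEnd hW x := by
  rw [arcEnd, arcEnd, arcLength_eq_arcLength_add_one hW h]
  push_cast
  ring

lemma reachable_add_one (hx : x ∉ W) (hx1 : x + 1 ∉ W) :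
    ((cycleGraph (n + 1)).induce (↑W)ᶜ).Reachable ⟨x, hx⟩ ⟨x + 1, hx1⟩ := by
  by_cases hloop : x + 1 = x
  · have : (⟨x + 1, hx1⟩ : ↥((↑W : Set (Fin (n + 1)))ᶜ)) = ⟨x, hx⟩ := Subtype.ext hloop
    rw [this]
  · exact Adj.reachable (cycleGraph_adj_iff_add_one.2 ⟨Ne.symm hloop, Or.inl rfl⟩)

lemma reachable_arcEnd (hW : W.Nonempty) (hx : x ∉ W) :
    ((cycleGraph (n + 1)).induce (↑W)ᶜ).Reachable ⟨x, hx⟩ ⟨arcEnd hW x, arcEnd_notMem hW hx⟩ := by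
  suffices ∀ t (ht : t ≤ arcLength hW x), ((cycleGraph (n + 1)).induce (↑W)ᶜ).Reachable
      ⟨x, hx⟩ ⟨x + t, add_notMem_of_le_arcLength hW hx ht⟩ from this _ le_rfl
  intro t ht
  induction t with
  | zero => simp
  | succ t ih =>
    have hnext : x + (t : Fin (n + 1)) + 1 ∉ W := by
      simpa [add_assoc] using add_notMem_of_le_arcLength hW hx ht
    refine (ih (by omega)).trans ?_
    convert reachable_add_one (add_notMem_of_le_arcLength hW hx (by omega)) hnext using 2
    push_cast
    ring

theorem cycNumComponents_eq_card_arcEnds (hW : W.Nonempty) :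
    cycNumComponents (n + 1) W = #(arcEnds W) := by
  rw [cycNumComponents, card_connectedComponent_eq_of_section
    (fun v : ↥((↑W : Set (Fin (n + 1)))ᶜ) => (⟨arcEnd hW v, arcEnd_mem_arcEnds hW v.2⟩ : arcEnds W))
    (fun e => ⟨e, (mem_filter.1 e.2).2.1⟩) ?_ ?_ ?_, Nat.card_eq_fintype_card, Fintype.card_coe]
  · rintro ⟨u, hu⟩ ⟨v, hv⟩ huv
    rcases (cycleGraph_adj_iff_add_one.1 huv).2 with rfl | rfl
    · simpa using (arcEnd_add_one hW hv).symm
    · simpa using arcEnd_add_one hW hu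
  · exact fun e => Subtype.ext (arcEnd_eq_self hW (mem_filter.1 e.2).2.2)
  · exact fun v => reachable_arcEnd hW v.2

end Arcs

section Words

variable {N k ℓ : ℕ} {b c : Bool} {s : Finset ℕ} {i : ℕ}

/-- The last positions of the maximal runs of zeros of the binary word of length `N` whose ones
are at the positions in `s`. -/
def gapEnds (N : ℕ) (s : Finset ℕ) : Finset ℕ :=
  {i ∈ range N | i ∉ s ∧ (i + 1 ∈ s ∨ i + 1 = N)}

lemma mem_gapEnds : i ∈ gapEnds N s ↔ i < N ∧ i ∉ s ∧ (i + 1 ∈ s ∨ i + 1 = N) := by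
  simp [gapEnds]

lemma gapEnds_insert (N : ℕ) (s : Finset ℕ) : gapEnds (N + 1) (insert N s) = gapEnds N s := by
  ext i
  simp only [mem_gapEnds, mem_insert]
  by_cases hi : i = N
  · simp [hi]
  · have : i + 1 ≠ N + 1 := by omega
    simp only [hi, this, false_or, or_false]
    constructor <;> rintro ⟨h1, h2, h3⟩ <;> exact ⟨by omega, h2, by tauto⟩

lemma gapEnds_succ (hs : s ⊆ range (N + 1)) :
    gapEnds (N + 2) s = insert (N + 1) ((gapEnds (N + 1) s).erase N) := by
  have hN1 : N + 1 ∉ s := fun h => by simpa using hs h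
  ext i
  simp only [mem_insert, mem_erase, mem_gapEnds]
  by_cases hi : i = N + 1
  · simp [hi, hN1]
  by_cases hi' : i = N
  · subst hi'
    simp [hN1]
  have : i + 1 ≠ N + 2 := by omega
  simp only [hi, hi', this, false_or, or_false, ne_eq, not_false_eq_true, true_and]
  constructor
  · rintro ⟨h1, h2, h3⟩
    exact ⟨by omega, h2, Or.inl h3⟩
  · rintro ⟨h1, h2, h3 | h3⟩
    · exact ⟨by omega, h2, h3⟩
    · omega

lemma card_gapEnds_succ (hs : s ⊆ range (N + 1)) :
    #(gapEnds (N + 2) s) = #(gapEnds (N + 1) s) + if N ∈ s then 1 else 0 := by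
  rw [gapEnds_succ hs, card_insert_of_notMem (by simp [mem_gapEnds])]
  split_ifs with hN
  · rw [erase_eq_of_notMem (by simp [mem_gapEnds, hN])]
  · rw [card_erase_add_one (by simp [mem_gapEnds, hN]), add_zero]

lemma card_filter_powerset_range_succ (N : ℕ) (P : Finset ℕ → Prop) [DecidablePred P] :
    #{s ∈ (range (N + 1)).powerset | P s} =
      #{s ∈ (range N).powerset | P s} + #{s ∈ (range N).powerset | P (insert N s)} := by
  have hN : ∀ s ∈ (range N).powerset, N ∉ s := fun s hs h => by simpa using mem_powerset.1 hs h
  rw [range_add_one, powerset_insert, filter_union, card_union_of_disjoint, filter_image,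
    card_image_of_injOn]
  · intro s hs t ht hst
    simpa [erase_insert (hN s (mem_filter.1 hs).1), erase_insert (hN t (mem_filter.1 ht).1)]
      using congrArg (·.erase N) hst
  · refine disjoint_left.2 fun s hs hs' => ?_
    obtain ⟨t, -, rfl⟩ := mem_image.1 (mem_filter.1 hs').1
    exact hN _ (mem_filter.1 hs).1 (mem_insert_self N t)

/-- The binary words of length `N + 1` (encoded by the set of positions of their ones) with `k`
ones, `ℓ` maximal runs of zeros, first letter `b` and last letter `c`. -/
def pathSet (N k ℓ : ℕ) (b c : Bool) : Finset (Finset ℕ) :=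
  {s ∈ (range (N + 1)).powerset | #s = k ∧ #(gapEnds (N + 1) s) = ℓ ∧ (0 ∈ s ↔ b) ∧ (N ∈ s ↔ c)}

lemma pathSet_zero_true : pathSet N 0 ℓ b true = ∅ := by
  simp +contextual [pathSet, filter_eq_empty_iff]

lemma pathSet_false_zero : pathSet N k 0 b false = ∅ := by
  refine filter_eq_empty_iff.2 fun s _ ⟨_, hgap, _, hN⟩ => ?_
  rw [card_eq_zero, eq_empty_iff_forall_notMem] at hgap
  exact hgap N (mem_gapEnds.2 ⟨by omega, by simpa using hN, Or.inr rfl⟩)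

lemma pathSet_eq_empty_of_lt (h : N + 1 < k) : pathSet N k ℓ b c = ∅ := by
  refine filter_eq_empty_iff.2 fun s hs ⟨hk, _⟩ => ?_
  have := card_le_card (mem_powerset.1 hs)
  simp only [card_range] at this
  omega

lemma disjoint_pathSet {k' ℓ' : ℕ} {b' c' : Bool} (h : b ≠ b' ∨ c ≠ c') :
    Disjoint (pathSet N k ℓ b c) (pathSet N k' ℓ' b' c') := by
  refine disjoint_left.2 fun s hs hs' => ?_
  simp only [pathSet, mem_filter] at hs hs'
  cases b <;> cases b' <;> cases c <;> cases c' <;> simp_all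

lemma card_pathSet_succ_true :
    #(pathSet (N + 1) (k + 1) ℓ b true) = #(pathSet N k ℓ b true) + #(pathSet N k ℓ b false) := by
  rw [← card_union_of_disjoint (disjoint_pathSet (by simp)), pathSet,
    card_filter_powerset_range_succ, filter_eq_empty_iff.2 fun s hs h => ?_, card_empty, zero_add]
  · congr 1
    ext s
    simp only [pathSet, mem_filter, mem_union, mem_powerset]
    by_cases hs : s ⊆ range (N + 1)
    · have hN1 : N + 1 ∉ s := fun h => by simpa using hs h
      simp only [hs, card_insert_of_notMem hN1, gapEnds_insert, mem_insert, true_and]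
      by_cases hN : N ∈ s <;> simp [hN]
    · simp [hs]
  · simpa using mem_powerset.1 hs (h.2.2.2.2 rfl)

lemma card_pathSet_succ_false :
    #(pathSet (N + 1) k (ℓ + 1) b false) =
      #(pathSet N k ℓ b true) + #(pathSet N k (ℓ + 1) b false) := by
  rw [← card_union_of_disjoint (disjoint_pathSet (by simp)), pathSet,
    card_filter_powerset_range_succ, ← add_zero #(_ ∪ _)]
  congr 1
  · congr 1
    ext s
    simp only [pathSet, mem_filter, mem_union, mem_powerset]
    by_cases hs : s ⊆ range (N + 1)
    · have hN1 : N + 1 ∉ s := fun h => by simpa using hs h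
      simp only [hs, card_gapEnds_succ hs, hN1, true_and]
      by_cases hN : N ∈ s <;> simp [hN]
    · simp [hs]
  · simp

/-- The number of compositions of `m` into `r` positive parts. -/
def compCount : ℕ → ℕ → ℕ
  | 0, 0 => 1
  | 0, _ + 1 => 0
  | _ + 1, 0 => 0
  | m + 1, r + 1 => m.choose r

lemma compCount_succ_succ (m r : ℕ) :
    compCount (m + 1) (r + 1) = compCount m (r + 1) + compCount m r := by
  rcases m with _ | m
  · rcases r with _ | r <;> simp [compCount]
  · rcases r with _ | r <;> simp [compCount, Nat.choose_succ_succ, add_comm]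

lemma card_pathSet_zero (hk : k ≤ 1) :
    #(pathSet 0 k ℓ b c) = compCount k (ℓ + b.toNat + c.toNat - 1) * compCount (1 - k) ℓ := by
  have hP : (range 1).powerset = {∅, {0}} := by decide
  have hg0 : gapEnds 1 ∅ = {0} := by decide
  have hg1 : gapEnds 1 {0} = ∅ := by decide
  rw [pathSet, zero_add, hP]
  interval_cases k <;> cases b <;> cases c <;> rcases ℓ with _ | _ | ℓ <;>
    simp [filter_insert, filter_singleton, hg0, hg1, compCount]

-- A word with `ℓ` runs of zeros, first letter `b` and last letter `c` has `ℓ + b + c - 1` runs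
-- of ones, and it is determined by the lengths of its runs.
theorem card_pathSet (hk : k ≤ N + 1) :
    #(pathSet N k ℓ b c) = compCount k (ℓ + b.toNat + c.toNat - 1) * compCount (N + 1 - k) ℓ := by
  induction N generalizing k ℓ c with
  | zero => exact card_pathSet_zero hk
  | succ N ih =>
    cases c
    · rcases ℓ with _ | ℓ
      · rw [pathSet_false_zero, card_empty]
        rcases k with _ | k <;> cases b <;> simp [compCount]
      · rw [card_pathSet_succ_false]
        rcases Nat.lt_or_ge (N + 1) k with hkN | hkN
        · obtain rfl : k = N + 2 := by omega
          simp [pathSet_eq_empty_of_lt, compCount]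
        · rw [ih hkN, ih hkN, show N + 1 + 1 - k = (N + 1 - k) + 1 by omega, compCount_succ_succ]
          simp only [Bool.toNat_true, Bool.toNat_false, add_zero, Nat.add_sub_cancel,
            show ℓ + 1 + b.toNat - 1 = ℓ + b.toNat by omega]
          ring
    · rcases k with _ | k
      · rw [pathSet_zero_true, card_empty]
        rcases ℓ with _ | ℓ <;> cases b <;> simp [compCount]
      · rw [card_pathSet_succ_true, ih (by omega), ih (by omega)]
        simp only [Bool.toNat_true, Bool.toNat_false, add_zero, Nat.add_sub_cancel,
          Nat.add_sub_add_right]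
        rcases hr : ℓ + b.toNat with _ | r
        · obtain rfl : ℓ = 0 := by omega
          rcases k with _ | k <;> simp [compCount]
        · rw [compCount_succ_succ, Nat.add_sub_cancel]
          ring

end Words

lemma card_filter_map_valEmbedding (N : ℕ) (P : Finset ℕ → Prop) [DecidablePred P] :
    #{W : Finset (Fin N) | P (W.map Fin.valEmbedding)} = #{s ∈ (range N).powerset | P s} := by
  have hinv : ∀ s ⊆ range N, ({a : Fin N | ↑a ∈ s} : Finset (Fin N)).map Fin.valEmbedding = s := by
    intro s hs
    ext i
    simp only [mem_map, mem_filter, mem_univ, true_and, Fin.valEmbedding_apply]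
    exact ⟨by rintro ⟨a, ha, rfl⟩; exact ha, fun hi => ⟨⟨i, by simpa using hs hi⟩, hi, rfl⟩⟩
  refine card_nbij' (fun W => W.map Fin.valEmbedding) (fun s => ({a | ↑a ∈ s} : Finset (Fin N)))
    ?_ ?_ ?_ ?_
  · intro W hW
    simp only [coe_filter, mem_univ, true_and, Set.mem_ofPred_eq, mem_powerset] at hW ⊢
    refine ⟨fun i hi => ?_, hW⟩
    obtain ⟨a, -, rfl⟩ := mem_map.1 hi
    simp
  · intro s hs
    simp only [coe_filter, mem_powerset, Set.mem_ofPred_eq, mem_univ, true_and] at hs ⊢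
    rw [hinv s hs.1]
    exact hs.2
  · intro W _
    ext a
    simp [Fin.val_inj]
  · intro s hs
    exact hinv s (mem_powerset.1 (mem_filter.1 hs).1)

-- Reading `W` as a word cut between `v_{N+1}` and `v_1`: the final run of zeros ends an arc only
-- if the word starts with a one.
lemma map_arcEnds {N : ℕ} (W : Finset (Fin (N + 1))) :
    (arcEnds W).map Fin.valEmbedding =
      {i ∈ gapEnds (N + 1) (W.map Fin.valEmbedding) | i = N → 0 ∈ W.map Fin.valEmbedding} := by
  ext i
  by_cases hi : i < N + 1
  swap
  · simp only [mem_map, mem_filter, mem_gapEnds]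
    constructor
    · rintro ⟨a, -, rfl⟩
      exact absurd a.isLt hi
    · rintro ⟨⟨h, -⟩, -⟩
      exact absurd h hi
  obtain ⟨a, rfl⟩ : ∃ a : Fin (N + 1), ↑a = i := ⟨⟨i, hi⟩, rfl⟩
  have hmem : ∀ {X : Finset (Fin (N + 1))} {b : Fin (N + 1)},
      (b : ℕ) ∈ X.map Fin.valEmbedding ↔ b ∈ X := by
    intro X b
    simp [Fin.val_inj]
  have h0 : (0 : ℕ) ∈ W.map Fin.valEmbedding ↔ (0 : Fin (N + 1)) ∈ W := by simp
  simp only [hmem, arcEnds, mem_filter, mem_univ, true_and, mem_gapEnds, h0]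
  by_cases ha : a = Fin.last N
  · subst ha
    simp
  · have hlt : (a : ℕ) < N := Fin.val_lt_last ha
    have hval : ((a + 1 : Fin (N + 1)) : ℕ) = a + 1 := Fin.val_add_one_of_lt' (by omega)
    rw [← hval, hmem, hval]
    simp [hlt.ne, hlt.le]

theorem card_cycSet_eq_card_pathSet {N k ℓ : ℕ} (hk : k ≠ 0) :
    #(cycSet (N + 1) k ℓ) = #(pathSet N k ℓ true true) + #(pathSet N k ℓ true false) +
      #(pathSet N k ℓ false true) + #(pathSet N k (ℓ + 1) false false) := by
  have hcyc : #(cycSet (N + 1) k ℓ) =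
      #{s ∈ (range (N + 1)).powerset | #s = k ∧ #{i ∈ gapEnds (N + 1) s | i = N → 0 ∈ s} = ℓ} := by
    rw [← card_filter_map_valEmbedding]
    congr 1
    refine filter_congr fun W _ => ?_
    rw [card_map]
    refine and_congr_right fun hW => ?_
    rw [cycNumComponents_eq_card_arcEnds (card_pos.1 (by omega)), ← map_arcEnds, card_map]
  rw [hcyc, ← card_union_of_disjoint (disjoint_pathSet (by simp)),
    ← card_union_of_disjoint, ← card_union_of_disjoint]
  · congr 1
    ext s
    simp only [pathSet, mem_filter, mem_union]
    by_cases h0 : 0 ∈ s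
    · simp only [h0, imp_true_iff, filter_true]
      by_cases hN : N ∈ s <;> simp [hN]
    · have hfilter : {i ∈ gapEnds (N + 1) s | i = N → 0 ∈ s} = (gapEnds (N + 1) s).erase N := by
        simp [h0, filter_ne']
      by_cases hN : N ∈ s
      · rw [hfilter, erase_eq_of_notMem (by simp [mem_gapEnds, hN])]
        simp [h0, hN]
      · rw [hfilter, ← card_erase_add_one (s := gapEnds (N + 1) s) (a := N)
          (by simp [mem_gapEnds, hN])]
        simp [h0, hN]
  · exact disjoint_union_left.2 ⟨disjoint_union_left.2 ⟨disjoint_pathSet (by simp),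
      disjoint_pathSet (by simp)⟩, disjoint_pathSet (by simp)⟩
  · exact disjoint_union_left.2 ⟨disjoint_pathSet (by simp), disjoint_pathSet (by simp)⟩

theorem card_cycSet_eq_choose {p m q : ℕ} :
    #(cycSet (p + m + 2) (p + 1) (q + 1)) =
      p.choose (q + 1) * m.choose q + 2 * (p.choose q * m.choose q) +
        p.choose q * m.choose (q + 1) := by
  rw [card_cycSet_eq_card_pathSet (by omega), card_pathSet (by omega), card_pathSet (by omega),
    card_pathSet (by omega), card_pathSet (by omega), show p + m + 1 + 1 - (p + 1) = m + 1 by omega]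
  simp only [Bool.toNat_true, Bool.toNat_false, compCount, Nat.add_sub_cancel, add_zero]
  ring

theorem card_cycSet_zero {n k : ℕ} : #(cycSet n k 0) = if k = n then 1 else 0 := by
  rw [cycSet, filter_congr fun W _ => by rw [cycNumComponents_eq_zero_iff, and_comm],
    ← filter_filter, filter_eq' univ univ, if_pos (mem_univ _), filter_singleton, card_univ,
    Fintype.card_fin]
  split_ifs <;> simp_all [eq_comm]

theorem cycSet_eq_empty_of_le {n k ℓ : ℕ} (h : n ≤ k) (hℓ : ℓ ≠ 0) : cycSet n k ℓ = ∅ := by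
  refine filter_eq_empty_iff.2 fun W _ ⟨hW, hc⟩ => hℓ (hc ▸ cycNumComponents_eq_zero_iff.2 ?_)
  exact eq_univ_of_card W (le_antisymm (card_le_univ W) (by simp; omega))

theorem Nat.sum_Ico_choose {a r : ℕ} (h : a ≤ r) (m : ℕ) :
    ∑ t ∈ Ico a m, t.choose r = m.choose (r + 1) := by
  induction m with
  | zero => simp
  | succ m ih =>
    rcases Nat.lt_or_ge m a with hm | hm
    · rw [Ico_eq_empty (by omega), sum_empty, Nat.choose_eq_zero_of_lt (by omega)]
    · rw [sum_Ico_succ_top hm, ih, Nat.choose_succ_succ' m r, add_comm]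

theorem sum_card_cycSet_eq_choose {p m q : ℕ} :
    ∑ i ∈ Icc (p + q + 2) (p + m + 1), #(cycSet i (p + 1) (q + 1)) =
      p.choose (q + 1) * m.choose (q + 1) + 2 * (p.choose q * m.choose (q + 1)) +
        p.choose q * m.choose (q + 2) := by
  rw [show Icc (p + q + 2) (p + m + 1) = Ico (q + (p + 2)) (m + (p + 2)) by ext; simp; omega,
    ← sum_Ico_add', sum_congr rfl fun t _ => by
      rw [show t + (p + 2) = p + t + 2 by ring, card_cycSet_eq_choose]]
  simp only [sum_add_distrib, ← mul_sum]
  rw [Nat.sum_Ico_choose le_rfl, Nat.sum_Ico_choose (by omega)]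

theorem cycSet_card_recurrence_general (a μ j : ℕ) (hμ : 2 ≤ μ) (hj : 1 ≤ j) :
    (cycSet a μ j).card =
      (cycSet (a - 1) (μ - 1) j).card +
        ∑ i ∈ Finset.Icc (μ + j - 2) (a - 2), (cycSet i (μ - 1) (j - 1)).card := by
  obtain ⟨p, rfl⟩ : ∃ p, μ = p + 2 := ⟨μ - 2, by omega⟩
  obtain ⟨q, rfl⟩ : ∃ q, j = q + 1 := ⟨j - 1, by omega⟩
  rcases Nat.lt_or_ge (p + 2) a with hlt | hle
  swap
  · rw [cycSet_eq_empty_of_le hle (by omega), cycSet_eq_empty_of_le (by omega) (by omega),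
      Icc_eq_empty (by omega)]
    simp
  obtain ⟨m, rfl⟩ : ∃ m, a = p + m + 3 := ⟨a - p - 3, by omega⟩
  rw [show p + m + 3 - 1 = p + m + 2 by omega, show p + 2 - 1 = p + 1 by omega,
    show p + m + 3 - 2 = p + m + 1 by omega, show p + m + 3 = p + 1 + m + 2 by omega,
    card_cycSet_eq_choose, card_cycSet_eq_choose]
  rcases q with _ | q
  · rw [show p + 2 + (0 + 1) - 2 = p + 1 by omega, Nat.sub_self]
    simp only [card_cycSet_zero, sum_ite_eq, zero_add, Nat.choose_one_right, Nat.choose_zero_right]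
    rw [if_pos (by simp)]
    ring
  · rw [show p + 2 + (q + 1 + 1) - 2 = p + q + 2 by omega, Nat.add_sub_cancel,
      sum_card_cycSet_eq_choose, Nat.choose_succ_succ' p (q + 1), Nat.choose_succ_succ' p q]
    ring

theorem cycSet_card_recurrence (a μ j : ℕ) (ha : 3 ≤ a) (hμ : 2 ≤ μ) (hj : 1 ≤ j) :
    (cycSet a μ j).card =
      (cycSet (a - 1) (μ - 1) j).card +
        ∑ i ∈ Finset.Icc (μ + j - 2) (a - 2), (cycSet i (μ - 1) (j - 1)).card :=
  cycSet_card_recurrence_general a μ j hμ hj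
end

section
/- Let a ≥ 1, μ ≥ 2, j ≥ 1 be integers. Define σ_{μ,j}(p_a) as the sum of coefficients c_λ in the e-expansion p_a = Σ_λ c_λ e_λ over partitions λ ⊢ a with λ'_1 = μ and λ'_2 = j. Then for a ≥ 3: σ_{μ,j}(p_a) = σ_{μ−1,j}(p_{a−1}) + Σ_{i=μ+j−2}^{a−2} (−1)^{a−1+i} σ_{μ−1,j−1}(p_i). -/
open MvPolynomial

/-- The set of partitions `λ ⊢ d` with `λ'_1 = μ` (i.e. `λ` has exactly `μ` parts) and
`λ'_2 = j` (i.e. `λ` has exactly `j` parts of size at least 2). -/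
def sigmaSet (d μ j : ℕ) : Finset (Nat.Partition d) :=
  Finset.univ.filter (fun p => p.parts.card = μ ∧ (p.parts.filter (fun x => 2 ≤ x)).card = j)

/-! Substituting the `e`-expansions of the `p_i`, `0 < i < a`, into Newton's identity
`p_a = (-1)^(a-1) a e_a + Σ_{0<i<a} (-1)^(a-1+i) e_{a-i} p_i` writes `p_a` in the `e`-basis: each
product `e_{a-i} e_λ` is `e` of `λ` with the part `a - i` added. In at least `a` variables
the `e_λ`, `λ ⊢ a`, are linearly independent (fundamental theorem of symmetric polynomials),
so these are the coefficients `c a`. Adding a part raises `λ'_1` by one, and raises `λ'_2` by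
one exactly when the part is at least `2`; so the term `i = a - 1` contributes
`σ_{μ-1,j}(p_{a-1})` and the others `σ_{μ-1,j-1}(p_i)`, which vanish for `i < μ + j - 2`
because `λ'_1 + λ'_2 ≤ |λ|`. -/

open Finset

theorem Multiset.card_add_card_filter_two_le_sum {s : Multiset ℕ} (hs : ∀ x ∈ s, 0 < x) :
    s.card + (s.filter (2 ≤ ·)).card ≤ s.sum := by
  induction s using Multiset.induction_on with
  | empty => simp
  | cons x s ih =>
    have hx := hs x (Multiset.mem_cons_self _ _)
    have := ih fun y hy => hs y (Multiset.mem_cons_of_mem hy)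
    rw [Multiset.filter_cons, Multiset.card_cons, Multiset.sum_cons]
    split_ifs <;>
      simp only [Multiset.card_add, Multiset.card_singleton, Multiset.card_zero] <;> omega

namespace Nat.Partition

-- `p.multiplicities i` is the multiplicity of the part `i + 1`, matching `esymmAlgHom`,
-- which sends `X i` to `esymm (i + 1)`.
noncomputable def multiplicities {n : ℕ} (p : n.Partition) : Fin n →₀ ℕ :=
  Finsupp.equivFunOnFinite.symm fun i => p.parts.count ((i : ℕ) + 1)

theorem multiplicities_injective {n : ℕ} : Function.Injective (multiplicities (n := n)) := by
  intro p q h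
  refine Nat.Partition.ext (Multiset.ext.mpr fun k => ?_)
  by_cases hk : 1 ≤ k ∧ k ≤ n
  · simpa [multiplicities, Nat.sub_add_cancel hk.1] using
      DFunLike.congr_fun h ⟨k - 1, by omega⟩
  · have (r : n.Partition) : k ∉ r.parts := fun hr => hk ⟨r.parts_pos hr, le_of_mem_parts hr⟩
    rw [Multiset.count_eq_zero_of_notMem (this p), Multiset.count_eq_zero_of_notMem (this q)]

def addPartTo {i : ℕ} (a : ℕ) (q : i.Partition) : a.Partition :=
  if h : i < a then
    ⟨(a - i) ::ₘ q.parts, by simpa [h] using fun _ => q.parts_pos, by simp [q.parts_sum]; omega⟩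
  else indiscrete a

theorem parts_addPartTo {i a : ℕ} (h : i < a) (q : i.Partition) :
    (addPartTo a q).parts = (a - i) ::ₘ q.parts := by
  simp [addPartTo, h]

theorem esymmPart_addPartTo {σ R : Type*} [Fintype σ] [CommSemiring R] {i a : ℕ}
    (h : i < a) (q : i.Partition) :
    esymmPart σ R (addPartTo a q) = esymm σ R (a - i) * esymmPart σ R q := by
  simp [esymmPart, parts_addPartTo h]

end Nat.Partition

open Nat.Partition

theorem MvPolynomial.aeval_monomial_multiplicities {σ R : Type*} [Fintype σ] [CommSemiring R]
    {n : ℕ} (p : n.Partition) :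
    aeval (fun i : Fin n => esymm σ R (i + 1)) (monomial p.multiplicities (1 : R)) =
      esymmPart σ R p := by
  classical
  let g : ℕ → MvPolynomial σ R := fun k => esymm σ R k ^ p.parts.count k
  have hsupp : p.parts.toFinset ⊆ Ico 1 (n + 1) := fun k hk => by
    rw [Multiset.mem_toFinset] at hk
    exact mem_Ico.mpr ⟨p.parts_pos hk, Nat.lt_succ_of_le (le_of_mem_parts hk)⟩
  calc aeval (fun i : Fin n => esymm σ R (i + 1)) (monomial p.multiplicities (1 : R))
      = ∏ i : Fin n, g (i + 1) := by
        rw [aeval_monomial, map_one, one_mul, Finsupp.prod_pow]; rfl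
    _ = ∏ k ∈ Ico 1 (n + 1), g k := by
        rw [Fin.prod_univ_eq_prod_range (fun i => g (i + 1)), range_eq_Ico, prod_Ico_add' g 0 n 1,
          zero_add]
    _ = ∏ k ∈ p.parts.toFinset, g k :=
        (prod_subset hsupp fun k _ hk => by
          simp [g, Multiset.count_eq_zero_of_notMem (Multiset.mem_toFinset.not.mp hk)]).symm
    _ = esymmPart σ R p := (prod_multiset_map_count _ _).symm

theorem MvPolynomial.linearIndependent_esymmPart {σ R : Type*} [Fintype σ] [CommRing R] {n : ℕ}
    (hn : n ≤ Fintype.card σ) : LinearIndependent R (fun p : n.Partition => esymmPart σ R p) := by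
  let f := (symmetricSubalgebra σ R).val.toLinearMap ∘ₗ (esymmAlgHom σ R n).toLinearMap
  have hf : Function.Injective f := Subtype.val_injective.comp (esymmAlgHom_injective R hn)
  have hfamily : (fun p : n.Partition => esymmPart σ R p) =
      f ∘ fun p => monomial p.multiplicities 1 := by
    funext p
    simp only [Function.comp_apply, f, LinearMap.coe_comp, AlgHom.toLinearMap_apply,
      Subalgebra.coe_val, esymmAlgHom_apply]
    exact (aeval_monomial_multiplicities p).symm
  rw [hfamily]
  exact ((basisMonomials (Fin n) R).linearIndependent.comp _ multiplicities_injective).map'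
    f (LinearMap.ker_eq_bot.mpr hf)

theorem MvPolynomial.psum_eq_sub_sum_Icc (σ R : Type*) [Fintype σ] [CommRing R] {a : ℕ}
    (ha : 0 < a) :
    psum σ R a = (-1) ^ (a + 1) * a * esymm σ R a -
      ∑ i ∈ Icc 1 (a - 1), (-1) ^ (a - i) * esymm σ R (a - i) * psum σ R i := by
  rw [psum_eq_mul_esymm_sub_sum σ R a ha]
  congr 1
  refine sum_nbij' Prod.snd (fun i => (a - i, i)) ?_ ?_ ?_ ?_ ?_ <;>
    simp only [mem_filter, HasAntidiagonal.mem_antidiagonal, Set.mem_Ioo, mem_Icc, Prod.forall,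
      Prod.mk.injEq, and_imp] <;> intros <;> first | omega | subst_vars; simp

-- The `e`-coefficients of `p_a` obtained by substituting the expansions `p_i = ∑ c i q • e_q`,
-- `i < a`, into Newton's identity.
noncomputable def newtonCoeff {R : Type*} [CommRing R] (a : ℕ) (c : (i : ℕ) → i.Partition → R)
    (l : a.Partition) : R :=
  (if l = indiscrete a then (-1 : R) ^ (a + 1) * a else 0) +
    ∑ i ∈ Icc 1 (a - 1), ∑ q : i.Partition with addPartTo a q = l, (-1) ^ (a - 1 + i) * c i q

theorem Finset.sum_smul_fiberwise {ι κ R M : Type*} [Fintype κ] [DecidableEq κ] [Semiring R]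
    [AddCommMonoid M] [Module R M] (s : Finset ι) (g : ι → κ) (f : ι → R) (v : κ → M) :
    ∑ k, (∑ i ∈ s with g i = k, f i) • v k = ∑ i ∈ s, f i • v (g i) := by
  simp only [sum_smul]
  rw [← sum_fiberwise s g fun i => f i • v (g i)]
  refine sum_congr rfl fun k _ => sum_congr rfl fun i hi => ?_
  rw [(mem_filter.mp hi).2]

theorem psum_eq_sum_newtonCoeff_smul {σ R : Type*} [Fintype σ] [CommRing R] {a : ℕ} (ha : 0 < a)
    (c : (i : ℕ) → i.Partition → R)
    (hc : ∀ i, 0 < i → i < a → psum σ R i = ∑ q : i.Partition, c i q • esymmPart σ R q) :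
    psum σ R a = ∑ l : a.Partition, newtonCoeff a c l • esymmPart σ R l := by
  have hsingle : ∑ l : a.Partition,
      (if l = indiscrete a then (-1 : R) ^ (a + 1) * a else 0) • esymmPart σ R l =
        (-1) ^ (a + 1) * a * esymm σ R a := by
    simp [ite_smul, smul_eq_C_mul]
  have hlift : ∀ i ∈ Icc 1 (a - 1), ∑ l : a.Partition,
      (∑ q : i.Partition with addPartTo a q = l, (-1 : R) ^ (a - 1 + i) * c i q) •
        esymmPart σ R l = -((-1) ^ (a - i) * esymm σ R (a - i) * psum σ R i) := by
    intro i hi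
    obtain ⟨hi₀, hia⟩ : 0 < i ∧ i < a := by rw [mem_Icc] at hi; omega
    have hsign : (-1 : R) ^ (a - 1 + i) = -(-1) ^ (a - i) := by
      rw [show a - 1 + i = a - i + 2 * (i - 1) + 1 by omega, pow_succ, pow_add, pow_mul]
      simp
    rw [sum_smul_fiberwise, hc i hi₀ hia, mul_sum, ← sum_neg_distrib]
    refine sum_congr rfl fun q _ => ?_
    rw [esymmPart_addPartTo hia, hsign, smul_eq_C_mul, smul_eq_C_mul]
    simp only [map_mul, map_neg, map_pow, map_one]
    ring
  simp only [newtonCoeff, add_smul, sum_add_distrib, sum_smul] at hlift ⊢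
  rw [hsingle, sum_comm, sum_congr rfl hlift, sum_neg_distrib, ← sub_eq_add_neg,
    psum_eq_sub_sum_Icc σ R ha]

theorem coeff_eq_newtonCoeff {σ R : Type*} [Fintype σ] [CommRing R] {a : ℕ} (ha : 0 < a)
    (haσ : a ≤ Fintype.card σ) (c : (i : ℕ) → i.Partition → R)
    (hc : ∀ i, 0 < i → i ≤ a → psum σ R i = ∑ q : i.Partition, c i q • esymmPart σ R q)
    (l : a.Partition) : c a l = newtonCoeff a c l :=
  Fintype.linearIndependent_iffₛ.mp (linearIndependent_esymmPart haσ) _ _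
    ((hc a ha le_rfl).symm.trans
      (psum_eq_sum_newtonCoeff_smul ha c fun i hi₀ hia => hc i hi₀ hia.le)) l

theorem sum_newtonCoeff_of_indiscrete_notMem {R : Type*} [CommRing R] {a : ℕ}
    (c : (i : ℕ) → i.Partition → R) {S : Finset a.Partition} (hS : indiscrete a ∉ S) :
    ∑ l ∈ S, newtonCoeff a c l =
      ∑ i ∈ Icc 1 (a - 1),
        (-1) ^ (a - 1 + i) * ∑ q : i.Partition with addPartTo a q ∈ S, c i q := by
  simp only [newtonCoeff, sum_add_distrib]
  rw [sum_eq_zero fun l hl => if_neg (ne_of_mem_of_not_mem hl hS), zero_add, sum_comm]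
  refine sum_congr rfl fun i _ => ?_
  rw [sum_fiberwise_eq_sum_filter, mul_sum]

theorem sigmaSet_eq_empty_of_lt {d μ j : ℕ} (h : d < μ + j) : sigmaSet d μ j = ∅ := by
  ext q
  simp only [sigmaSet, mem_filter, mem_univ, true_and, notMem_empty, iff_false, not_and]
  have := Multiset.card_add_card_filter_two_le_sum fun _ => q.parts_pos
  rw [q.parts_sum] at this
  omega

theorem filter_addPartTo_mem_sigmaSet_of_add_one_eq {i a μ j : ℕ} (h : i + 1 = a) (hμ : 0 < μ) :
    univ.filter (fun q : i.Partition => addPartTo a q ∈ sigmaSet a μ j) =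
      sigmaSet i (μ - 1) j := by
  ext q
  simp only [sigmaSet, mem_filter, mem_univ, parts_addPartTo (show i < a by omega),
    show a - i = 1 by omega, Multiset.card_cons, Nat.not_ofNat_le_one, not_false_eq_true,
    Multiset.filter_cons_of_neg, true_and]
  omega

theorem filter_addPartTo_mem_sigmaSet_of_add_two_le {i a μ j : ℕ} (h : i + 2 ≤ a) (hμ : 0 < μ)
    (hj : 0 < j) :
    univ.filter (fun q : i.Partition => addPartTo a q ∈ sigmaSet a μ j) =
      sigmaSet i (μ - 1) (j - 1) := by
  ext q
  simp only [sigmaSet, mem_filter, mem_univ, parts_addPartTo (show i < a by omega),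
    Multiset.card_cons, show 2 ≤ a - i by omega, Multiset.filter_cons_of_pos, true_and]
  omega

/-- Recurrence for `σ_{μ,j}(p_a)`: given e-basis expansions `p_i = Σ_λ (c i λ) e_λ`
for all `i ≤ a`, we have, for `a ≥ 3`, `μ ≥ 2`, `j ≥ 1`,
`σ_{μ,j}(p_a) = σ_{μ−1,j}(p_{a−1}) + Σ_{i=μ+j−2}^{a−2} (−1)^{a−1+i} σ_{μ−1,j−1}(p_i)`. -/
theorem sigma_psum_recurrence (N a μ j : ℕ) (ha : 3 ≤ a) (hμ : 2 ≤ μ) (hj : 1 ≤ j)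
    (hN : a ≤ N)
    (c : (i : ℕ) → i.Partition → ℚ)
    (hc : ∀ i ≤ a, psum (Fin N) ℚ i = ∑ p : i.Partition, c i p • esymmPart (Fin N) ℚ p) :
    ∑ p ∈ sigmaSet a μ j, c a p =
      (∑ p ∈ sigmaSet (a - 1) (μ - 1) j, c (a - 1) p) +
        ∑ i ∈ Finset.Icc (μ + j - 2) (a - 2),
          (-1 : ℚ) ^ (a - 1 + i) * ∑ p ∈ sigmaSet i (μ - 1) (j - 1), c i p := by
  have hcoeff (l : a.Partition) : c a l = newtonCoeff a c l :=
    coeff_eq_newtonCoeff (by omega) (by simpa using hN) c (fun i _ hi => hc i hi) l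
  have hind : indiscrete a ∉ sigmaSet a μ j := by
    simp only [sigmaSet, mem_filter, mem_univ, indiscrete_parts (show a ≠ 0 by omega),
      Multiset.card_singleton, true_and, not_and]
    omega
  rw [sum_congr rfl fun l _ => hcoeff l, sum_newtonCoeff_of_indiscrete_notMem c hind,
    show Icc 1 (a - 1) = Icc 1 (a - 2 + 1) by congr 1; omega, sum_Icc_succ_top (by omega),
    filter_addPartTo_mem_sigmaSet_of_add_one_eq (show a - 2 + 1 + 1 = a by omega) (by omega)]
  rw [show a - 2 + 1 = a - 1 by omega, (show Even (a - 1 + (a - 1)) from ⟨_, rfl⟩).neg_one_pow,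
    one_mul, add_comm, add_right_inj]
  rw [sum_congr rfl fun i hi => by
    rw [filter_addPartTo_mem_sigmaSet_of_add_two_le (by rw [mem_Icc] at hi; omega) (by omega) hj]]
  refine (sum_subset (Icc_subset_Icc_left (by omega)) fun i hi hi' => ?_).symm
  rw [sigmaSet_eq_empty_of_lt (by simp only [mem_Icc] at hi hi'; omega), sum_empty, mul_zero]
end

section
/- Let a be a positive integer and j an even positive integer. Let A be the set of subsets W of the vertex set {v_1,...,v_{2a}} of the cycle C_{2a} such that (i) for every i ∈ {1,...,a} exactly one of v_i, v_{i+a} lies in W, (ii) either [v_1,v_{2a} ∉ W, v_a,v_{a+1} ∈ W, and C_{2a} − W has j−1 components] or [v_1,v_a ∉ W, v_{a+1},v_{2a} ∈ W, and C_{2a} − W has j+1 components]. Then |A| = C(a,j), the binomial coefficient a choose j. -/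
open SimpleGraph

/-!
Deleting `W` from the cycle leaves one component per maximal run of vertices outside `W`,
that is, one per position `i ∉ W` with `i + 1 ∈ W`. Condition (i) says that the 0/1-word `x`
of `W` is negated by the shift by `a`, so these ascents correspond to the sign changes of the
linear word `x₀ … x_{a-1} x_a` with `x_a = ¬x₀`. Compared with the cyclic word `x₀ … x_{a-1}`,
this gains or loses one change according to whether `x_{a-1} = x₀`, so each alternative of (ii)
says exactly that `x₀ = 0` and the cyclic word has `j` sign changes. A cyclic word with `x₀ = 0`
is determined by its set of sign changes, which may be any even subset of `{0, …, a-1}`.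
-/

open Finset
open scoped Fin.NatCast

theorem cycleGraph_adj_iff {n : ℕ} [NeZero n] (hn : 2 ≤ n) {u v : Fin n} :
    (cycleGraph n).Adj u v ↔ u = v + 1 ∨ v = u + 1 := by
  obtain ⟨m, rfl⟩ := Nat.exists_eq_add_of_le' hn
  rw [cycleGraph_adj, sub_eq_iff_eq_add, sub_eq_iff_eq_add, add_comm 1 v, add_comm 1 u]

section Runs

variable {n : ℕ} [NeZero n] {W : Finset (Fin n)}

theorem exists_add_natCast_succ_mem (hW : W.Nonempty) (i : Fin n) :
    ∃ m : ℕ, i + ((m + 1 : ℕ) : Fin n) ∈ W := by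
  obtain ⟨w, hw⟩ := hW
  refine ⟨(w - i - 1).val, ?_⟩
  rwa [Nat.cast_succ, Fin.cast_val_eq_self, sub_add_cancel, add_sub_cancel]

noncomputable def runLength (hW : W.Nonempty) (i : Fin n) : ℕ :=
  Nat.find (exists_add_natCast_succ_mem hW i)

noncomputable def runEnd (hW : W.Nonempty) (i : Fin n) : Fin n :=
  i + (runLength hW i : Fin n)

variable (hW : W.Nonempty) {i : Fin n}

theorem runEnd_add_one_mem : runEnd hW i + 1 ∈ W := by
  have := Nat.find_spec (exists_add_natCast_succ_mem hW i)
  rwa [Nat.cast_succ, ← add_assoc] at this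

theorem runLength_eq_zero_iff : runLength hW i = 0 ↔ i + 1 ∈ W := by
  simp [runLength, Nat.find_eq_zero]

theorem runEnd_eq_self (h : i + 1 ∈ W) : runEnd hW i = i := by
  simp [runEnd, (runLength_eq_zero_iff hW).mpr h]

theorem runLength_eq_add_one (h : i + 1 ∉ W) : runLength hW i = runLength hW (i + 1) + 1 := by
  have hshift : ∀ m : ℕ, i + 1 + ((m + 1 : ℕ) : Fin n) = i + ((m + 1 + 1 : ℕ) : Fin n) := by
    intro m; push_cast; abel
  refine le_antisymm (Nat.find_le ?_) ?_
  · rw [← hshift]; exact Nat.find_spec (exists_add_natCast_succ_mem hW (i + 1))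
  · obtain ⟨k, hk⟩ : ∃ k, runLength hW i = k + 1 :=
      Nat.exists_eq_succ_of_ne_zero (mt (runLength_eq_zero_iff hW).mp h)
    rw [hk, Nat.add_le_add_iff_right]
    refine Nat.find_le ?_
    rw [hshift, ← hk]
    exact Nat.find_spec (exists_add_natCast_succ_mem hW i)

theorem runEnd_add_one (h : i + 1 ∉ W) : runEnd hW (i + 1) = runEnd hW i := by
  rw [runEnd, runEnd, runLength_eq_add_one hW h]
  push_cast; abel

theorem runEnd_notMem (hi : i ∉ W) : runEnd hW i ∉ W := by
  by_cases hk : runLength hW i = 0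
  · rwa [runEnd_eq_self hW ((runLength_eq_zero_iff hW).mp hk)]
  · have : i + ((runLength hW i - 1 + 1 : ℕ) : Fin n) ∉ W :=
      Nat.find_min (exists_add_natCast_succ_mem hW i) (Nat.sub_one_lt hk)
    rwa [Nat.sub_add_cancel (Nat.one_le_iff_ne_zero.mpr hk)] at this

theorem runEnd_eq_of_adj (hn : 2 ≤ n) {u v : Fin n} (hu : u ∉ W) (hv : v ∉ W)
    (h : (cycleGraph n).Adj u v) : runEnd hW u = runEnd hW v := by
  rcases (cycleGraph_adj_iff hn).mp h with rfl | rfl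
  · exact runEnd_add_one hW hu
  · exact (runEnd_add_one hW hv).symm

theorem runEnd_eq_of_reachable (hn : 2 ≤ n) {u v : ((W : Set (Fin n))ᶜ : Set (Fin n))}
    (h : ((cycleGraph n).induce (W : Set (Fin n))ᶜ).Reachable u v) :
    runEnd hW u = runEnd hW v := by
  rw [reachable_iff_reflTransGen] at h
  induction h with
  | refl => rfl
  | @tail w x _ hadj ih => exact ih.trans (runEnd_eq_of_adj hW hn w.2 x.2 hadj)

theorem reachable_runEnd (hn : 2 ≤ n) (u : ((W : Set (Fin n))ᶜ : Set (Fin n))) :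
    ((cycleGraph n).induce (W : Set (Fin n))ᶜ).Reachable u
      ⟨runEnd hW u, runEnd_notMem hW u.2⟩ := by
  obtain ⟨u, hu⟩ := u
  induction hk : runLength hW u generalizing u with
  | zero =>
    simp only [runEnd_eq_self hW ((runLength_eq_zero_iff hW).mp hk), Reachable.refl]
  | succ k ih =>
    have hu1 : u + 1 ∉ W := fun h => by simp [(runLength_eq_zero_iff hW).mpr h] at hk
    have hstep := ih (u + 1) hu1 (by rw [runLength_eq_add_one hW hu1] at hk; omega)
    simp only [runEnd_add_one hW hu1] at hstep
    have hadj : ((cycleGraph n).induce (W : Set (Fin n))ᶜ).Adj ⟨u, hu⟩ ⟨u + 1, hu1⟩ :=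
      (cycleGraph_adj_iff hn).mpr (Or.inr rfl)
    exact hadj.reachable.trans hstep

end Runs

theorem card_connectedComponent_induce_compl {n : ℕ} [NeZero n] {W : Finset (Fin n)}
    (hn : 2 ≤ n) (hW : W.Nonempty) :
    Nat.card ((cycleGraph n).induce (W : Set (Fin n))ᶜ).ConnectedComponent =
      #{i | i ∉ W ∧ i + 1 ∈ W} := by
  set G := (cycleGraph n).induce (W : Set (Fin n))ᶜ
  let f (i : ({i | i ∉ W ∧ i + 1 ∈ W} : Finset (Fin n))) : G.ConnectedComponent :=
    G.connectedComponentMk ⟨i, (mem_filter.mp i.2).2.1⟩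
  have hf : Function.Bijective f := by
    constructor
    · rintro ⟨i, hi⟩ ⟨i', hi'⟩ h
      have := runEnd_eq_of_reachable hW hn (ConnectedComponent.exact h)
      simp only [runEnd_eq_self hW (mem_filter.mp hi).2.2,
        runEnd_eq_self hW (mem_filter.mp hi').2.2] at this
      exact Subtype.ext this
    · refine ConnectedComponent.ind fun u => ⟨⟨runEnd hW u, ?_⟩, ?_⟩
      · exact mem_filter.mpr ⟨mem_univ _, runEnd_notMem hW u.2, runEnd_add_one_mem hW⟩
      · exact ConnectedComponent.sound (reachable_runEnd hW hn u).symm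
  rw [← Nat.card_eq_of_bijective f hf, Nat.card_eq_finsetCard]

section Words

-- Indices are read modulo `n`, so the word is `n`-periodic.
def indicatorWord {n : ℕ} [NeZero n] (W : Finset (Fin n)) (m : ℕ) : Bool :=
  decide ((m : Fin n) ∈ W)

theorem indicatorWord_of_lt {n : ℕ} [NeZero n] (W : Finset (Fin n)) {m : ℕ} (h : m < n) :
    indicatorWord W m = decide (⟨m, h⟩ ∈ W) := by
  rw [indicatorWord, show (m : Fin n) = ⟨m, h⟩ from Fin.ext (Fin.val_cast_of_lt h)]

theorem card_ascents_eq_card_filter_range {n : ℕ} [NeZero n] (W : Finset (Fin n)) :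
    #{i | i ∉ W ∧ i + 1 ∈ W} =
      #{m ∈ range n | indicatorWord W m = false ∧ indicatorWord W (m + 1) = true} := by
  rw [card_filter, card_filter, ← Fin.sum_univ_eq_sum_range]
  simp [indicatorWord]

theorem card_ascents_of_antiperiodic (x : ℕ → Bool) (a : ℕ)
    (hx : ∀ m ≤ a, x (m + a) = !x m) :
    #{m ∈ range (2 * a) | x m = false ∧ x (m + 1) = true} =
      #{m ∈ range a | x m ≠ x (m + 1)} := by
  simp only [card_filter]
  rw [two_mul, sum_range_add, ← sum_add_distrib]
  refine sum_congr rfl fun m hm => ?_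
  have hm : m < a := mem_range.mp hm
  rw [add_comm a m, hx m hm.le, show m + a + 1 = m + 1 + a by omega, hx (m + 1) hm]
  cases x m <;> cases x (m + 1) <;> rfl

def cyclicChanges (a : ℕ) (x : ℕ → Bool) : Finset ℕ :=
  {m ∈ range a | x m ≠ x ((m + 1) % a)}

theorem card_changes_add_ite (x : ℕ → Bool) (b : ℕ) (hx : x (b + 1) = !x 0) :
    #{m ∈ range (b + 1) | x m ≠ x (m + 1)} + (if x b = x 0 then 0 else 1) =
      #(cyclicChanges (b + 1) x) + (if x b = x 0 then 1 else 0) := by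
  have hwrap : ∑ m ∈ range b, (if x m ≠ x ((m + 1) % (b + 1)) then 1 else 0) =
      ∑ m ∈ range b, (if x m ≠ x (m + 1) then 1 else 0) :=
    sum_congr rfl fun m hm => by rw [Nat.mod_eq_of_lt (by simp at hm; omega)]
  rw [cyclicChanges, card_filter, card_filter, sum_range_succ, sum_range_succ, Nat.mod_self, hwrap,
    hx]
  cases x b <;> cases x 0 <;> simp

def parityWord (E : Finset ℕ) (m : ℕ) : Bool :=
  decide (Odd #(E ∩ range m))

@[simp]
theorem parityWord_zero (E : Finset ℕ) : parityWord E 0 = false := by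
  simp [parityWord]

theorem parityWord_succ (E : Finset ℕ) (m : ℕ) :
    parityWord E (m + 1) = (parityWord E m ^^ decide (m ∈ E)) := by
  by_cases h : m ∈ E
  · simp [parityWord, range_add_one, inter_insert_of_mem h, Nat.odd_add_one, h,
      -Nat.not_odd_iff_even]
  · simp [parityWord, range_add_one, inter_insert_of_notMem h, h]

theorem cyclicChanges_congr {a : ℕ} {x y : ℕ → Bool} (h : ∀ m < a, x m = y m) :
    cyclicChanges a x = cyclicChanges a y := by
  ext m
  simp only [cyclicChanges, mem_filter, mem_range]
  refine and_congr_right fun hm => ?_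
  rw [h m hm, h _ (Nat.mod_lt _ (by omega))]

theorem cyclicChanges_parityWord {a : ℕ} {E : Finset ℕ} (hE : E ⊆ range a) (he : Even #E) :
    cyclicChanges a (parityWord E) = E := by
  have hwrap : ∀ m < a, parityWord E ((m + 1) % a) = parityWord E (m + 1) := by
    intro m hm
    rcases (show m + 1 ≤ a from hm).lt_or_eq with h | h
    · rw [Nat.mod_eq_of_lt h]
    · rw [h, Nat.mod_self, parityWord_zero, parityWord, inter_eq_left.mpr hE]
      simpa using he
  ext m
  simp only [cyclicChanges, mem_filter, mem_range]
  constructor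
  · rintro ⟨hm, hne⟩
    rw [hwrap m hm, parityWord_succ] at hne
    revert hne
    cases parityWord E m <;> simp
  · intro hm
    have hm' : m < a := mem_range.mp (hE hm)
    rw [hwrap m hm', parityWord_succ]
    simp [hm, hm']

theorem parityWord_cyclicChanges {a : ℕ} {x : ℕ → Bool} (h0 : x 0 = false) :
    ∀ m < a, parityWord (cyclicChanges a x) m = x m
  | 0, _ => by rw [parityWord_zero, h0]
  | m + 1, hm => by
    rw [parityWord_succ, parityWord_cyclicChanges h0 m (by omega)]
    simp only [cyclicChanges, mem_filter, mem_range, Nat.mod_eq_of_lt hm]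
    cases x m <;> cases x (m + 1) <;> simp [show m < a by omega]

end Words

section Antipodal

variable {a : ℕ}

def IsAntipodal (a : ℕ) (W : Finset (Fin (2 * a))) : Prop :=
  ∀ i : Fin a, Xor (⟨i.1, by omega⟩ ∈ W) (⟨i.1 + a, by omega⟩ ∈ W)

instance : DecidablePred (IsAntipodal a) := fun W => by
  unfold IsAntipodal; infer_instance

def antipodalSet (a : ℕ) (x : ℕ → Bool) : Finset (Fin (2 * a)) :=
  {v | if v.1 < a then x v = true else x (v - a) = false}

theorem isAntipodal_antipodalSet (x : ℕ → Bool) : IsAntipodal a (antipodalSet a x) :=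
  fun i => by simp [antipodalSet, Xor]

theorem antipodalSet_congr {x y : ℕ → Bool} (h : ∀ m < a, x m = y m) :
    antipodalSet a x = antipodalSet a y := by
  ext v
  simp only [antipodalSet, mem_filter, mem_univ, true_and]
  split_ifs with hv
  · rw [h _ hv]
  · rw [h _ (by omega)]

variable [NeZero a]

theorem indicatorWord_antipodalSet (x : ℕ → Bool) {m : ℕ} (hm : m < a) :
    indicatorWord (antipodalSet a x) m = x m := by
  rw [indicatorWord_of_lt _ (by omega : m < 2 * a)]
  simp [antipodalSet, hm]

theorem cyclicChanges_antipodalSet (x : ℕ → Bool) :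
    cyclicChanges a (indicatorWord (antipodalSet a x)) = cyclicChanges a x :=
  cyclicChanges_congr fun _ hm => indicatorWord_antipodalSet x hm

variable {W : Finset (Fin (2 * a))}

theorem indicatorWord_add_of_isAntipodal (hW : IsAntipodal a W) :
    ∀ m ≤ a, indicatorWord W (m + a) = !indicatorWord W m := by
  have hlow : ∀ m < a, indicatorWord W (m + a) = !indicatorWord W m := fun m hm => by
    rw [indicatorWord_of_lt W (by omega : m + a < 2 * a), indicatorWord_of_lt W (by omega)]
    have := hW ⟨m, hm⟩
    by_cases h : (⟨m, by omega⟩ : Fin (2 * a)) ∈ W <;> simp_all [Xor]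
  intro m hm
  rcases hm.lt_or_eq with hm | rfl
  · exact hlow m hm
  · have hcycle : indicatorWord W (m + m) = indicatorWord W 0 := by
      simp [indicatorWord, ← two_mul]
    have h0 := hlow 0 (NeZero.pos m)
    rw [zero_add] at h0
    rw [hcycle, h0, Bool.not_not]

theorem antipodalSet_indicatorWord (hW : IsAntipodal a W) :
    antipodalSet a (indicatorWord W) = W := by
  ext v
  simp only [antipodalSet, mem_filter, mem_univ, true_and]
  split_ifs with hv
  · simp [indicatorWord]
  · have h := indicatorWord_add_of_isAntipodal hW (v - a) (by omega)
    rw [Nat.sub_add_cancel (by omega), indicatorWord, Fin.cast_val_eq_self] at h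
    rw [← decide_eq_true_iff (p := v ∈ W), h]
    simp

theorem card_isAntipodal_cyclicChanges {j : ℕ} (hj : Even j) :
    #{W : Finset (Fin (2 * a)) | IsAntipodal a W ∧ indicatorWord W 0 = false ∧
      #(cyclicChanges a (indicatorWord W)) = j} = a.choose j := by
  rw [show a.choose j = #(powersetCard j (range a)) by simp]
  refine card_nbij' (fun W => cyclicChanges a (indicatorWord W))
    (fun E => antipodalSet a (parityWord E)) ?_ ?_ ?_ ?_
  · intro W hW
    obtain ⟨-, -, -, hcard⟩ := mem_filter.mp (mem_coe.mp hW)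
    exact mem_powersetCard.mpr ⟨filter_subset _ _, hcard⟩
  · intro E hE
    obtain ⟨hsub, hcard⟩ := mem_powersetCard.mp hE
    refine mem_filter.mpr ⟨mem_univ _, isAntipodal_antipodalSet _, ?_, ?_⟩
    · rw [indicatorWord_antipodalSet _ (NeZero.pos a), parityWord_zero]
    · rw [cyclicChanges_antipodalSet, cyclicChanges_parityWord hsub (hcard ▸ hj), hcard]
  · intro W hW
    obtain ⟨-, hW, h0, -⟩ := mem_filter.mp (mem_coe.mp hW)
    dsimp only
    rw [antipodalSet_congr (parityWord_cyclicChanges h0), antipodalSet_indicatorWord hW]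
  · intro E hE
    obtain ⟨hsub, hcard⟩ := mem_powersetCard.mp hE
    dsimp only
    rw [cyclicChanges_antipodalSet, cyclicChanges_parityWord hsub (hcard ▸ hj)]

theorem cycNumComponents_add_ite (hW : IsAntipodal a W) :
    cycNumComponents (2 * a) W + (if indicatorWord W (a - 1) = indicatorWord W 0 then 0 else 1) =
      #(cyclicChanges a (indicatorWord W)) +
        (if indicatorWord W (a - 1) = indicatorWord W 0 then 1 else 0) := by
  have hne : W.Nonempty := by
    rcases hW ⟨0, NeZero.pos a⟩ with ⟨h, -⟩ | ⟨h, -⟩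
    exacts [⟨_, h⟩, ⟨_, h⟩]
  have hx := indicatorWord_add_of_isAntipodal hW
  obtain ⟨b, rfl⟩ : ∃ b, a = b + 1 := Nat.exists_eq_succ_of_ne_zero (NeZero.ne a)
  rw [cycNumComponents, card_connectedComponent_induce_compl (by omega) hne,
    card_ascents_eq_card_filter_range, card_ascents_of_antiperiodic _ _ hx, Nat.add_sub_cancel]
  exact card_changes_add_ite _ b (by simpa using hx 0 (Nat.zero_le _))

end Antipodal

theorem corner_conditions_iff {a j : ℕ} [NeZero a] (hj : 1 ≤ j) {W : Finset (Fin (2 * a))}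
    (hW : IsAntipodal a W) {v₁ va va₁ v₂a : Fin (2 * a)} (hv₁ : (v₁ : ℕ) = 0)
    (hva : (va : ℕ) = a - 1) (hva₁ : (va₁ : ℕ) = a) (hv₂a : (v₂a : ℕ) = 2 * a - 1) :
    ((v₁ ∉ W ∧ v₂a ∉ W ∧ va ∈ W ∧ va₁ ∈ W ∧ cycNumComponents (2 * a) W = j - 1) ∨
        (v₁ ∉ W ∧ va ∉ W ∧ va₁ ∈ W ∧ v₂a ∈ W ∧
          cycNumComponents (2 * a) W = j + 1)) ↔
      indicatorWord W 0 = false ∧ #(cyclicChanges a (indicatorWord W)) = j := by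
  have hmem (v : Fin (2 * a)) : v ∈ W ↔ indicatorWord W v = true := by simp [indicatorWord]
  have hx := indicatorWord_add_of_isAntipodal hW
  have hva₁' : indicatorWord W a = !indicatorWord W 0 := by simpa using hx 0 (Nat.zero_le a)
  have hv₂a' : indicatorWord W (2 * a - 1) = !indicatorWord W (a - 1) := by
    rw [show 2 * a - 1 = a - 1 + a by omega]
    exact hx _ (Nat.sub_le a 1)
  have hcount := cycNumComponents_add_ite hW
  simp only [hmem, hv₁, hva, hva₁, hv₂a, hva₁', hv₂a']
  revert hcount
  cases indicatorWord W 0 <;> cases indicatorWord W (a - 1) <;> simp <;> omega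

/-- Let `a ≥ 1` and let `j` be an even positive integer. The set of subsets `W` of the
vertices of the cycle `C_{2a}` such that (i) for every `i ∈ {1,…,a}` exactly one of
`v_i, v_{i+a}` lies in `W`, and (ii) either `v_1, v_{2a} ∉ W`, `v_a, v_{a+1} ∈ W` and
`C_{2a} − W` has `j−1` components, or `v_1, v_a ∉ W`, `v_{a+1}, v_{2a} ∈ W` and
`C_{2a} − W` has `j+1` components, has cardinality `a` choose `j`. -/
theorem card_alternating_corner_sets (a j : ℕ) (ha : 1 ≤ a) (hj : 1 ≤ j)
    (hjeven : Even j)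
    (v₁ va va₁ v₂a : Fin (2 * a))
    (hv₁ : (v₁ : ℕ) = 0) (hva : (va : ℕ) = a - 1)
    (hva₁ : (va₁ : ℕ) = a) (hv₂a : (v₂a : ℕ) = 2 * a - 1) :
    (Finset.univ.filter (fun W : Finset (Fin (2 * a)) =>
        (∀ i : Fin a,
          Xor ((⟨i.1, by have := i.isLt; omega⟩ : Fin (2 * a)) ∈ W)
               ((⟨i.1 + a, by have := i.isLt; omega⟩ : Fin (2 * a)) ∈ W)) ∧
        ((v₁ ∉ W ∧ v₂a ∉ W ∧ va ∈ W ∧ va₁ ∈ W ∧ cycNumComponents (2 * a) W = j - 1) ∨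
         (v₁ ∉ W ∧ va ∉ W ∧ va₁ ∈ W ∧ v₂a ∈ W ∧
           cycNumComponents (2 * a) W = j + 1)))).card = a.choose j := by
  have : NeZero a := ⟨by omega⟩
  calc _ = #{W : Finset (Fin (2 * a)) | IsAntipodal a W ∧ indicatorWord W 0 = false ∧
          #(cyclicChanges a (indicatorWord W)) = j} :=
        congrArg card <| filter_congr fun W _ => and_congr_right fun hW =>
          corner_conditions_iff hj hW hv₁ hva hva₁ hv₂a
    _ = a.choose j := card_isAntipodal_cyclicChanges hjeven
end

section
/- Let (G,w) be a vertex-weighted graph and e a non-loop edge of G. Then X_{(G,w)} = X_{(G∖e, w)} − X_{(G/e, w/e)}, where G∖e deletes e and G/e contracts e, with (w/e)(v*) = w(v_1) + w(v_2) for the vertex v* obtained by identifying the endpoints v_1, v_2 of e, and weights unchanged elsewhere. -/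
open MvPolynomial

open scoped Classical

/-- The chromatic symmetric function (in `N` color variables) of a vertex-weighted
graph `(G, w)`: the sum over proper colorings `κ` of `G` of `Π_v x_{κ(v)}^{w(v)}`. -/
noncomputable def chromSym {V : Type*} [Fintype V] (G : SimpleGraph V) (w : V → ℕ)
    (N : ℕ) : MvPolynomial (Fin N) ℚ :=
  ∑ κ ∈ Finset.univ.filter (fun κ : V → Fin N => ∀ u v : V, G.Adj u v → κ u ≠ κ v),
    ∏ v : V, (X (κ v)) ^ (w v)

/-- The contraction `G/e` of `G` by the (non-loop) edge `e = v₁v₂`: the vertices `v₁`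
and `v₂` are identified to a single vertex (represented by `v₁` on the vertex type
`{v // v ≠ v₂}`), and every edge incident with `v₁` or `v₂` becomes an edge incident
with the new vertex (multi-edges collapse, which does not affect proper colorings). -/
def contractEdge {V : Type*} (G : SimpleGraph V) (v₁ v₂ : V) :
    SimpleGraph {v : V // v ≠ v₂} where
  Adj a b := a ≠ b ∧
    (G.Adj a.1 b.1 ∨ (a.1 = v₁ ∧ G.Adj v₂ b.1) ∨ (b.1 = v₁ ∧ G.Adj a.1 v₂))
  symm := by
    constructor
    rintro a b ⟨hne, h⟩
    refine ⟨hne.symm, ?_⟩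
    rcases h with h | ⟨h1, h2⟩ | ⟨h1, h2⟩
    · exact Or.inl h.symm
    · exact Or.inr (Or.inr ⟨h1, h2.symm⟩)
    · exact Or.inr (Or.inl ⟨h1, h2.symm⟩)
  loopless := ⟨fun a h => h.1 rfl⟩

/-- Deletion-contraction for the chromatic symmetric function of vertex-weighted
graphs: for any (non-loop) edge `e = v₁v₂` of `G`,
`X_{(G,w)} = X_{(G∖e, w)} − X_{(G/e, w/e)}`, where the contracted vertex receives
weight `w(v₁) + w(v₂)`. -/
theorem chromSym_deletion_contraction {V : Type*} [Fintype V] [DecidableEq V]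
    (G : SimpleGraph V) (w : V → ℕ) (hw : ∀ v : V, 0 < w v)
    (v₁ v₂ : V) (he : G.Adj v₁ v₂) (N : ℕ) :
    chromSym G w N =
      chromSym (G.deleteEdges {s(v₁, v₂)}) w N -
        chromSym (contractEdge G v₁ v₂)
          (fun v => if v.1 = v₁ then w v₁ + w v₂ else w v.1) N := by
  have hne : v₁ ≠ v₂ := G.ne_of_adj he
  rw [eq_sub_iff_add_eq]
  unfold chromSym
  refine Eq.trans ?_ (Finset.sum_filter_add_sum_filter_not _ (fun κ => κ v₁ ≠ κ v₂) _)
  congr 1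
  · -- proper colorings of G are exactly proper colorings of G∖e with κ v₁ ≠ κ v₂
    apply Finset.sum_congr
    · ext κ
      simp only [Finset.mem_filter, Finset.mem_univ, true_and,
        SimpleGraph.deleteEdges_adj, Set.mem_singleton_iff]
      constructor
      · intro h
        exact ⟨fun u v hu => h u v hu.1, h v₁ v₂ he⟩
      · rintro ⟨h, h12⟩ u v huv
        by_cases hs : s(u, v) = s(v₁, v₂)
        · rw [Sym2.eq_iff] at hs
          rcases hs with ⟨rfl, rfl⟩ | ⟨rfl, rfl⟩
          · exact h12
          · exact fun hx => h12 hx.symm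
        · exact h u v ⟨huv, hs⟩
    · intros; rfl
  · -- colorings with κ v₁ = κ v₂ correspond to proper colorings of the contraction
    refine (Finset.sum_nbij' (i := fun κ (a : {v : V // v ≠ v₂}) => κ a.1)
      (j := fun κ' v => if h : v = v₂ then κ' ⟨v₁, hne⟩ else κ' ⟨v, h⟩)
      ?_ ?_ ?_ ?_ ?_).symm
    · intro κ hκ
      simp only [Finset.mem_filter, Finset.mem_univ, true_and, not_not,
        SimpleGraph.deleteEdges_adj, Set.mem_singleton_iff] at hκ ⊢
      obtain ⟨hprop, heq⟩ := hκ
      rintro a b ⟨hab, hadj⟩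
      have ha2 := a.2
      have hb2 := b.2
      rcases hadj with h | ⟨h1, h2⟩ | ⟨h1, h2⟩
      · refine hprop a.1 b.1 ⟨h, ?_⟩
        rw [Sym2.eq_iff]
        rintro (⟨hx, hy⟩ | ⟨hx, hy⟩)
        · exact hb2 hy
        · exact ha2 hx
      · have hvb : κ v₂ ≠ κ b.1 := by
          refine hprop v₂ b.1 ⟨h2, ?_⟩
          rw [Sym2.eq_iff]
          rintro (⟨hx, hy⟩ | ⟨hx, hy⟩)
          · exact hb2 hy
          · exact hab (Subtype.ext (h1.trans hy.symm))
        rw [show a.1 = v₁ from h1, heq]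
        exact hvb
      · have hav : κ a.1 ≠ κ v₂ := by
          refine hprop a.1 v₂ ⟨h2, ?_⟩
          rw [Sym2.eq_iff]
          rintro (⟨hx, hy⟩ | ⟨hx, hy⟩)
          · exact hab (Subtype.ext (hx.trans h1.symm))
          · exact ha2 hx
        rw [show b.1 = v₁ from h1, heq]
        exact hav
    · intro κ' hκ'
      simp only [Finset.mem_filter, Finset.mem_univ, true_and, not_not,
        SimpleGraph.deleteEdges_adj, Set.mem_singleton_iff] at hκ' ⊢
      constructor
      · rintro u v ⟨huv, hs⟩
        have huvne : u ≠ v := G.ne_of_adj huv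
        by_cases hu : u = v₂
        · have hv : v ≠ v₂ := fun h => huvne (hu.trans h.symm)
          simp only [dif_pos hu, dif_neg hv]
          refine hκ' ⟨v₁, hne⟩ ⟨v, hv⟩ ⟨?_, Or.inr (Or.inl ⟨rfl, hu ▸ huv⟩)⟩
          intro h
          apply hs
          rw [Subtype.ext_iff] at h
          simp only at h
          rw [hu, ← h]
          exact Sym2.eq_swap
        · by_cases hv : v = v₂
          · simp only [dif_neg hu, dif_pos hv]
            refine hκ' ⟨u, hu⟩ ⟨v₁, hne⟩ ⟨?_, Or.inr (Or.inr ⟨rfl, hv ▸ huv⟩)⟩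
            intro h
            apply hs
            rw [Subtype.ext_iff] at h
            simp only at h
            rw [hv, h]
          · simp only [dif_neg hu, dif_neg hv]
            exact hκ' ⟨u, hu⟩ ⟨v, hv⟩
              ⟨fun h => huvne (congrArg Subtype.val h), Or.inl huv⟩
      · simp [hne]
    · intro κ hκ
      simp only [Finset.mem_filter, Finset.mem_univ, true_and, not_not] at hκ
      funext v
      by_cases h : v = v₂
      · subst h; simp [hκ.2]
      · simp [h]
    · intro κ' _
      funext a
      have := a.2
      simp [this]
    · intro κ' hκ'
      simp only [Finset.mem_filter, Finset.mem_univ, true_and, not_not] at hκ'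
      obtain ⟨-, heq⟩ := hκ'
      symm
      rw [← Finset.prod_erase_mul Finset.univ _ (Finset.mem_univ v₂)]
      have hsub : ∀ f : V → MvPolynomial (Fin N) ℚ,
          ∏ v ∈ Finset.univ.erase v₂, f v = ∏ a : {v : V // v ≠ v₂}, f a.1 := by
        intro f
        rw [← Finset.prod_subtype (Finset.univ.erase v₂) (p := fun v => v ≠ v₂)]
        intro x
        simp [Finset.mem_erase]
      rw [hsub]
      have hterm : ∀ a : {v : V // v ≠ v₂},
          (X (κ' a.1) : MvPolynomial (Fin N) ℚ) ^ (if a.1 = v₁ then w v₁ + w v₂ else w a.1)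
            = X (κ' a.1) ^ (w a.1) * (if a = ⟨v₁, hne⟩ then X (κ' v₂) ^ (w v₂) else 1) := by
        intro a
        by_cases h : a = ⟨v₁, hne⟩
        · subst h
          simp [pow_add, heq]
        · have h' : a.1 ≠ v₁ := fun hx => h (Subtype.ext hx)
          simp [h', h]
      calc ∏ a : {v : V // v ≠ v₂},
            (X (κ' a.1) : MvPolynomial (Fin N) ℚ) ^ (if a.1 = v₁ then w v₁ + w v₂ else w a.1)
          = ∏ a : {v : V // v ≠ v₂},
            (X (κ' a.1) : MvPolynomial (Fin N) ℚ) ^ (w a.1)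
              * (if a = ⟨v₁, hne⟩ then X (κ' v₂) ^ (w v₂) else 1) :=
            Finset.prod_congr rfl fun a _ => hterm a
        _ = (∏ a : {v : V // v ≠ v₂}, (X (κ' a.1) : MvPolynomial (Fin N) ℚ) ^ (w a.1))
              * X (κ' v₂) ^ (w v₂) := by
            rw [Finset.prod_mul_distrib]
            congr 1
            simp
end
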